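/- arXiv:1803.11460 — 5 statements merged into one kernel-verified Lean document; each statement's English description precedes it below -/
import Mathlib

section
/- Let Ω be a finite set, μ a probability measure on Ω with μ(η) > 0 for every η ∈ Ω, T: Ω → Ω a map with T∘T = id, c: Ω → (0,∞) a positive function, and f: Ω → [0,∞). Then Σ_{η∈Ω} c(η)(√(f(T(η))) − √(f(η)))·√(f(η))·μ(η) ≤ −(1/4) Σ_{η∈Ω} c(η)(√(f(T(η))) − √(f(η)))² μ(η) + (1/16) Σ_{η∈Ω} (1/c(η))·( c(η) − c(T(η))·μ(T(η))/μ(η) )² · (√(f(T(η))) + √(f(η)))² μ(η). -/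
private lemma stmt_6_aux {Ω : Type*} [Fintype Ω] (μ : Ω → ℝ) (hμ : ∀ η, 0 < μ η)
    (T : Ω → Ω) (hTT : ∀ η, T (T η) = η)
    (c : Ω → ℝ) (hc : ∀ η, 0 < c η) (g : Ω → ℝ) :
    ∑ η, c η * (g (T η) - g η) * g η * μ η
      ≤ -(1 / 4) * ∑ η, c η * (g (T η) - g η) ^ 2 * μ η
        + (1 / 16) * ∑ η, (1 / c η) * (c η - c (T η) * (μ (T η) / μ η)) ^ 2
            * (g (T η) + g η) ^ 2 * μ η := by
  classical
  have hbij : Function.Bijective T := Function.Involutive.bijective hTT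
  -- abbreviations as sums
  set P : Ω → ℝ := fun η => c η * ((g (T η) - g η) * (g (T η) + g η)) * μ η with hP
  set Q : Ω → ℝ := fun η => c (T η) * ((g (T η) - g η) * (g (T η) + g η)) * μ (T η) with hQ
  have h1 : ∑ η, P η = ∑ η, -(Q η) := by
    refine Fintype.sum_bijective T hbij _ _ fun η => ?_
    simp only [hP, hQ, hTT η]
    ring
  -- key1: the LHS rewritten
  have key1 : ∑ η, c η * (g (T η) - g η) * g η * μ η
      = (1/2) * ∑ η, P η - (1/2) * ∑ η, c η * (g (T η) - g η) ^ 2 * μ η := by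
    rw [Finset.mul_sum, Finset.mul_sum, ← Finset.sum_sub_distrib]
    exact Finset.sum_congr rfl fun η _ => by simp only [hP]; ring
  -- key2: symmetrization
  have key2 : ∑ η, P η
      = (1/2) * ∑ η, (c η - c (T η) * (μ (T η) / μ η))
          * ((g (T η) - g η) * (g (T η) + g η)) * μ η := by
    have h2 : ∑ η, (c η - c (T η) * (μ (T η) / μ η))
        * ((g (T η) - g η) * (g (T η) + g η)) * μ η
        = ∑ η, (P η - Q η) := by
      refine Finset.sum_congr rfl fun η _ => ?_
      have hne : μ η ≠ 0 := (hμ η).ne'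
      simp only [hP, hQ]
      field_simp
    rw [h2, Finset.sum_sub_distrib]
    rw [Finset.sum_neg_distrib] at h1
    linarith [h1]
  -- termwise bound
  have main : (1/4) * ∑ η, (c η - c (T η) * (μ (T η) / μ η))
        * ((g (T η) - g η) * (g (T η) + g η)) * μ η
      ≤ (1/4) * ∑ η, c η * (g (T η) - g η) ^ 2 * μ η
        + (1/16) * ∑ η, (1 / c η) * (c η - c (T η) * (μ (T η) / μ η)) ^ 2
            * (g (T η) + g η) ^ 2 * μ η := by
    rw [Finset.mul_sum, Finset.mul_sum, Finset.mul_sum, ← Finset.sum_add_distrib]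
    refine Finset.sum_le_sum fun η _ => ?_
    rw [← sub_nonneg]
    have hcne : c η ≠ 0 := (hc η).ne'
    have hexp : (1:ℝ)/4 * (c η * (g (T η) - g η) ^ 2 * μ η)
        + 1/16 * ((1 / c η) * (c η - c (T η) * (μ (T η) / μ η)) ^ 2
            * (g (T η) + g η) ^ 2 * μ η)
        - 1/4 * ((c η - c (T η) * (μ (T η) / μ η))
            * ((g (T η) - g η) * (g (T η) + g η)) * μ η)
        = μ η * (2 * c η * (g (T η) - g η)
            - (c η - c (T η) * (μ (T η) / μ η)) * (g (T η) + g η)) ^ 2 / (16 * c η) := by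
      field_simp
      ring
    rw [hexp]
    exact div_nonneg (mul_nonneg (hμ η).le (sq_nonneg _)) (by linarith [hc η])
  linarith [key1, key2, main]

/-- elementary inequality on a finite probability space comparing
`⟨c·(√f∘T − √f), √f⟩_μ` with the Dirichlet-form term, for an involution `T`,
a positive rate function `c` and a nonnegative function `f`. -/
theorem stmt_6 {Ω : Type*} [Fintype Ω] (μ : Ω → ℝ) (hμ : ∀ η, 0 < μ η)
    (hμ1 : ∑ η, μ η = 1) (T : Ω → Ω) (hT : T ∘ T = id)
    (c : Ω → ℝ) (hc : ∀ η, 0 < c η) (f : Ω → ℝ) (hf : ∀ η, 0 ≤ f η) :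
    ∑ η, c η * (Real.sqrt (f (T η)) - Real.sqrt (f η)) * Real.sqrt (f η) * μ η
      ≤ -(1 / 4) * ∑ η, c η * (Real.sqrt (f (T η)) - Real.sqrt (f η)) ^ 2 * μ η
        + (1 / 16) * ∑ η, (1 / c η) * (c η - c (T η) * (μ (T η) / μ η)) ^ 2
            * (Real.sqrt (f (T η)) + Real.sqrt (f η)) ^ 2 * μ η := by
  exact stmt_6_aux μ hμ T (fun η => congrFun hT η) c hc (fun η => Real.sqrt (f η))
end

section
/- Let 0 < α ≤ β < 1 and r ∈ (0,1). There exists a constant C > 0, depending only on α, β and r, such that for every integer N ≥ 2, every family p_z ∈ [α, β] (z ∈ Λ_N = {1,...,N−1}), the Bernoulli product probability measure ν on Ω_N = {0,1}^{Λ_N} with ν(η(z)=1) = p_z, every density f with respect to ν, every x ∈ Λ_N and every A > 0: | Σ_{η∈Ω_N} (η(x) − r) f(η) ν(η) | ≤ (C/A)·I_x^r(√f, ν) + C·A + C·|p_x − r|, where I_x^r(√f, ν) = Σ_{η∈Ω_N} c_x(η; r)·(√(f(η^x)) − √(f(η)))² ν(η) and c_x(η; r) = (1/2)[ η(x)(1−r)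 + (1−η(x)) r ]. -/
/-- Particle configurations on the bulk `Λ_N = {1,...,N−1}`. -/
abbrev Config (N : ℕ) := {x : ℕ // x ∈ Finset.Icc 1 (N - 1)} → Bool

/-- The Bernoulli product measure on `{0,1}^{Λ_N}` with marginals `p x`. -/
noncomputable def bernoulliProduct (N : ℕ)
    (p : {x : ℕ // x ∈ Finset.Icc 1 (N - 1)} → ℝ) (η : Config N) : ℝ :=
  ∏ x : {x : ℕ // x ∈ Finset.Icc 1 (N - 1)}, if η x then p x else 1 - p x

/-- The configuration `η^x` obtained from `η` by flipping the value at `x`. -/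
def flipAt (N : ℕ) (x : {x : ℕ // x ∈ Finset.Icc 1 (N - 1)}) (η : Config N) : Config N :=
  fun z => if z = x then !(η z) else η z

/-- The boundary flip rate `c_x(η; r) = (1/2)[η(x)(1−r) + (1−η(x))r]`. -/
noncomputable def flipRate (N : ℕ) (r : ℝ) (x : {x : ℕ // x ∈ Finset.Icc 1 (N - 1)})
    (η : Config N) : ℝ :=
  (1 / 2) * ((if η x then (1:ℝ) else 0) * (1 - r) + (1 - if η x then (1:ℝ) else 0) * r)

abbrev Site (N : ℕ) := {x : ℕ // x ∈ Finset.Icc 1 (N - 1)}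

lemma flipAt_invol (N : ℕ) (x : Site N) : Function.Involutive (flipAt N x) := by
  intro η; funext z; by_cases h : z = x <;> simp [flipAt, h]

lemma flipAt_apply_self (N : ℕ) (x : Site N) (η : Config N) :
    flipAt N x η x = !(η x) := by simp [flipAt]

lemma flipAt_apply_ne (N : ℕ) (x z : Site N) (η : Config N) (h : z ≠ x) :
    flipAt N x η z = η z := by simp [flipAt, h]

noncomputable def mProd (N : ℕ) (p : Site N → ℝ) (x : Site N) (η : Config N) : ℝ :=
  ∏ z ∈ Finset.univ.erase x, (if η z then p z else 1 - p z)

lemma bp_eq (N : ℕ) (p : Site N → ℝ) (x : Site N) (η : Config N) :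
    bernoulliProduct N p η = (if η x then p x else 1 - p x) * mProd N p x η :=
  (Finset.mul_prod_erase _ _ (Finset.mem_univ x)).symm

lemma mProd_flip (N : ℕ) (p : Site N → ℝ) (x : Site N) (η : Config N) :
    mProd N p x (flipAt N x η) = mProd N p x η :=
  Finset.prod_congr rfl fun z hz => by
    rw [flipAt_apply_ne N x z η (Finset.ne_of_mem_erase hz)]

lemma mProd_nonneg (N : ℕ) (p : Site N → ℝ) (x : Site N)
    (hnn : ∀ z, 0 ≤ p z) (hle : ∀ z, p z ≤ 1) (η : Config N) :
    0 ≤ mProd N p x η :=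
  Finset.prod_nonneg fun z _ => by
    cases hz : η z <;> simp [hz]
    · linarith [hle z]
    · exact hnn z

lemma sum_flip (N : ℕ) (x : Site N) (h : Config N → ℝ) :
    ∑ η : Config N, h (flipAt N x η) = ∑ η : Config N, h η :=
  Equiv.sum_comp ((flipAt_invol N x).toPerm _) h

set_option maxHeartbeats 1000000 in
lemma key_ineq (β r p a b A : ℝ) (h1 : β < 1)
    (hp0 : 0 < p) (hpb : p ≤ β) (hr0 : 0 < r) (hr1 : r < 1)
    (ha : 0 ≤ a) (hb : 0 ≤ b) (hA : 0 < A) :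
    |(1-r)*p*b - r*(1-p)*a| ≤
      (1/(1-β))/A * (((r*(1-p)+(1-r)*p)/2) * (Real.sqrt b - Real.sqrt a)^2)
      + (1/(1-β))*A*((1-p)*a + p*b)
      + (1/(1-β))*|p - r| *((1-p)*a + p*b) := by
  set s := Real.sqrt a with hsd
  set t := Real.sqrt b with htd
  have hs : s^2 = a := Real.sq_sqrt ha
  have ht : t^2 = b := Real.sq_sqrt hb
  have hs0 : 0 ≤ s := Real.sqrt_nonneg a
  have ht0 : 0 ≤ t := Real.sqrt_nonneg b
  have hβ : (0:ℝ) < 1 - β := by linarith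
  have hp1 : p < 1 := lt_of_le_of_lt hpb h1
  have hp1' : (0:ℝ) < 1 - p := by linarith
  have hq0 : (0:ℝ) ≤ |p - r| := abs_nonneg _
  set q := |p - r| with hqd
  set u := |t - s| with hud
  have hu0 : 0 ≤ u := abs_nonneg _
  have hu2 : u^2 = (t-s)^2 := sq_abs _
  clear_value s t q u
  clear hsd htd
  -- step: A * (u*(t+s)) ≤ (t-s)^2/2 + A^2*(t+s)^2/2
  have hstep : A * (u*(t+s)) ≤ (t-s)^2/2 + A^2*(t+s)^2/2 := by
    linarith [sq_nonneg (u - A*(t+s)), hu2]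
  -- abs triangle bound
  have habs : |(1-r)*p*b - r*(1-p)*a| ≤ (1-r)*p*(u*(t+s)) + q*s^2 := by
    have hE : (1-r)*p*b - r*(1-p)*a = (1-r)*p*((t-s)*(t+s)) + (p-r)*s^2 := by
      rw [← hs, ← ht]; ring
    rw [hE]
    calc |(1-r)*p*((t-s)*(t+s)) + (p-r)*s^2|
        ≤ |(1-r)*p*((t-s)*(t+s))| + |(p-r)*s^2| := abs_add_le _ _
      _ = (1-r)*p*(u*(t+s)) + q*s^2 := by
          rw [abs_mul, abs_mul, abs_mul, abs_mul,
            abs_of_nonneg (by linarith : (0:ℝ) ≤ 1-r),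
            abs_of_nonneg hp0.le, abs_of_nonneg (add_nonneg ht0 hs0),
            abs_of_nonneg (sq_nonneg s)]
          rw [hud, hqd]
  -- coefficient facts
  have c2 : (1-β)*p ≤ 1-p := by
    have e1 : p*(2-β) ≤ β*(2-β) :=
      mul_le_mul_of_nonneg_right hpb (by linarith)
    have e2 : (0:ℝ) ≤ (1-β)^2 := sq_nonneg _
    nlinarith [e1, e2]
  -- main multiplied inequality
  have main : (1-β)*A*|(1-r)*p*b - r*(1-p)*a| ≤
      ((r*(1-p)+(1-r)*p)/2)*(t-s)^2 + A^2*((1-p)*a + p*b)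
      + A*q*((1-p)*a + p*b) := by
    have h2 : (1-β)*A*|(1-r)*p*b - r*(1-p)*a| ≤
        (1-β)*((1-r)*p)*(A*(u*(t+s))) + (1-β)*A*(q*s^2) := by
      have := mul_le_mul_of_nonneg_left habs
        (by positivity : (0:ℝ) ≤ (1-β)*A)
      nlinarith [this]
    have hcoefpos : (0:ℝ) ≤ (1-β)*((1-r)*p) :=
      mul_nonneg hβ.le (mul_nonneg (by linarith) hp0.le)
    have h3 : (1-β)*((1-r)*p)*(A*(u*(t+s))) ≤
        (1-β)*((1-r)*p)*((t-s)^2/2 + A^2*(t+s)^2/2) :=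
      mul_le_mul_of_nonneg_left hstep hcoefpos
    have coef : (1-β)*((1-r)*p) ≤ r*(1-p)+(1-r)*p := by
      have e1 : (0:ℝ) ≤ r*(1-p) := mul_nonneg hr0.le hp1'.le
      have e2 : (0:ℝ) ≤ β*((1-r)*p) :=
        mul_nonneg (by linarith : (0:ℝ) ≤ β) (mul_nonneg (by linarith) hp0.le)
      linarith [e1, e2]
    have h4 : (1-β)*((1-r)*p)*((t-s)^2/2) ≤ (r*(1-p)+(1-r)*p)*((t-s)^2/2) :=
      mul_le_mul_of_nonneg_right coef (by positivity)
    have h5 : (1-β)*((1-r)*p)*(A^2*(t+s)^2/2) ≤ A^2*((1-p)*s^2 + p*t^2) := by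
      have hs2 : (t+s)^2/2 ≤ s^2 + t^2 := by linarith [sq_nonneg (t-s)]
      have a1 : (1-β)*((1-r)*p) ≤ (1-β)*p := by
        linarith [mul_nonneg hβ.le (mul_nonneg hr0.le hp0.le)]
      have a2 : (1-β)*((1-r)*p)*((t+s)^2/2) ≤ (1-β)*p*(s^2+t^2) := by
        apply mul_le_mul a1 hs2 (by positivity)
          (mul_nonneg hβ.le hp0.le)
      have a1' : (1-β)*p ≤ p := by
        linarith [mul_nonneg (show (0:ℝ) ≤ β by linarith) hp0.le]
      have a3 : (1-β)*p*(s^2+t^2) ≤ (1-p)*s^2 + p*t^2 := by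
        have b1 := mul_le_mul_of_nonneg_right c2 (sq_nonneg s)
        have b2 := mul_le_mul_of_nonneg_right a1' (sq_nonneg t)
        linarith [b1, b2]
      have a4 := mul_le_mul_of_nonneg_left (a2.trans a3) (sq_nonneg A)
      linarith [a4]
    have h6 : (1-β)*A*(q*s^2) ≤ A*q*((1-p)*s^2 + p*t^2) := by
      have hb1 : (1-β)*s^2 ≤ (1-p)*s^2 :=
        mul_le_mul_of_nonneg_right (by linarith) (sq_nonneg s)
      have hb2 := mul_le_mul_of_nonneg_left hb1 (mul_nonneg hA.le hq0)
      have hb3 : (0:ℝ) ≤ A*q*(p*t^2) :=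
        mul_nonneg (mul_nonneg hA.le hq0) (mul_nonneg hp0.le (sq_nonneg t))
      linarith [hb2, hb3]
    rw [← hs, ← ht] at h2 ⊢
    linarith [h2, h3, h4, h5, h6]
  -- divide
  have hden : (0:ℝ) < (1-β)*A := by positivity
  calc |(1-r)*p*b - r*(1-p)*a|
      = ((1-β)*A*|(1-r)*p*b - r*(1-p)*a|) / ((1-β)*A) :=
        (mul_div_cancel_left₀ _ hden.ne').symm
    _ ≤ (((r*(1-p)+(1-r)*p)/2)*(t-s)^2 + A^2*((1-p)*a + p*b)
        + A*q*((1-p)*a + p*b)) / ((1-β)*A) := by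
        exact (div_le_div_iff_of_pos_right hden).mpr main
    _ = (1/(1-β))/A * (((r*(1-p)+(1-r)*p)/2) * (t - s)^2)
      + (1/(1-β))*A*((1-p)*a + p*b)
      + (1/(1-β))*q*((1-p)*a + p*b) := by
        field_simp

noncomputable def tFun (N : ℕ) (p : Site N → ℝ) (r : ℝ) (f : Config N → ℝ)
    (x : Site N) (η : Config N) : ℝ :=
  ((if η x then (1:ℝ) else 0) - r) * f η * bernoulliProduct N p η

noncomputable def rFun (N : ℕ) (p : Site N → ℝ) (r : ℝ) (f : Config N → ℝ)
    (x : Site N) (η : Config N) : ℝ :=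
  flipRate N r x η * (Real.sqrt (f (flipAt N x η)) - Real.sqrt (f η)) ^ 2
    * bernoulliProduct N p η

noncomputable def gFun (N : ℕ) (p : Site N → ℝ) (f : Config N → ℝ) (η : Config N) : ℝ :=
  f η * bernoulliProduct N p η

set_option maxHeartbeats 1000000 in
lemma pointwise (β r : ℝ) (h1 : β < 1) (hr0 : 0 < r) (hr1 : r < 1)
    (N : ℕ) (p : Site N → ℝ) (x : Site N)
    (hnn : ∀ z, 0 < p z) (hβ : ∀ z, p z ≤ β)
    (f : Config N → ℝ) (hf : ∀ η, 0 ≤ f η) (A : ℝ) (hA : 0 < A) (η : Config N) :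
    |tFun N p r f x η + tFun N p r f x (flipAt N x η)| ≤
      (1/(1-β))/A * (rFun N p r f x η + rFun N p r f x (flipAt N x η))
      + ((1/(1-β))*A + (1/(1-β)) * |p x - r|)
        * (gFun N p f η + gFun N p f (flipAt N x η)) := by
  set η' := flipAt N x η with hη'
  have hinv : flipAt N x η' = η := flipAt_invol N x η
  have hm : 0 ≤ mProd N p x η :=
    mProd_nonneg N p x (fun z => (hnn z).le) (fun z => (hβ z).trans h1.le) η
  have hmf : mProd N p x η' = mProd N p x η := mProd_flip N p x η
  have hν : bernoulliProduct N p η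
      = (if η x then p x else 1 - p x) * mProd N p x η := bp_eq N p x η
  have hν' : bernoulliProduct N p η'
      = (if η' x then p x else 1 - p x) * mProd N p x η := by
    rw [bp_eq N p x η', hmf]
  have hx' : η' x = !(η x) := flipAt_apply_self N x η
  set m := mProd N p x η with hmd
  cases hx : η x with
  | false =>
    have hx'' : η' x = true := by simp [hx', hx]
    have hKey := key_ineq β r (p x) (f η) (f η') A h1 (hnn x) (hβ x) hr0 hr1
      (hf η) (hf η') hA
    have hmK := mul_le_mul_of_nonneg_left hKey hm
    calc |tFun N p r f x η + tFun N p r f x η'|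
        = m * |(1-r)*(p x)*(f η') - r*(1-(p x))*(f η)| := by
          have e : tFun N p r f x η + tFun N p r f x η'
              = m * ((1-r)*(p x)*(f η') - r*(1-(p x))*(f η)) := by
            simp [tFun, hν, hν', hx, hx'']
            ring
          rw [e, abs_mul, abs_of_nonneg hm]
      _ ≤ m * ((1/(1-β))/A * (((r*(1-(p x))+(1-r)*(p x))/2)
              * (Real.sqrt (f η') - Real.sqrt (f η))^2)
            + (1/(1-β))*A*((1-(p x))*(f η) + (p x)*(f η'))
            + (1/(1-β)) * |p x - r| * ((1-(p x))*(f η) + (p x)*(f η'))) := hmK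
      _ = (1/(1-β))/A * (rFun N p r f x η + rFun N p r f x η')
          + ((1/(1-β))*A + (1/(1-β)) * |p x - r|)
            * (gFun N p f η + gFun N p f η') := by
          simp [rFun, gFun, flipRate, hν, hν', hx, hx'', ← hη', hinv]
          ring
  | true =>
    have hx'' : η' x = false := by simp [hx', hx]
    have hKey := key_ineq β r (p x) (f η') (f η) A h1 (hnn x) (hβ x) hr0 hr1
      (hf η') (hf η) hA
    have hmK := mul_le_mul_of_nonneg_left hKey hm
    calc |tFun N p r f x η + tFun N p r f x η'|
        = m * |(1-r)*(p x)*(f η) - r*(1-(p x))*(f η')| := by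
          have e : tFun N p r f x η + tFun N p r f x η'
              = m * ((1-r)*(p x)*(f η) - r*(1-(p x))*(f η')) := by
            simp [tFun, hν, hν', hx, hx'']
            ring
          rw [e, abs_mul, abs_of_nonneg hm]
      _ ≤ m * ((1/(1-β))/A * (((r*(1-(p x))+(1-r)*(p x))/2)
              * (Real.sqrt (f η) - Real.sqrt (f η'))^2)
            + (1/(1-β))*A*((1-(p x))*(f η') + (p x)*(f η))
            + (1/(1-β)) * |p x - r| * ((1-(p x))*(f η') + (p x)*(f η))) := hmK
      _ = (1/(1-β))/A * (rFun N p r f x η + rFun N p r f x η')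
          + ((1/(1-β))*A + (1/(1-β)) * |p x - r|)
            * (gFun N p f η + gFun N p f η') := by
          simp [rFun, gFun, flipRate, hν, hν', hx, hx'', ← hη', hinv]
          ring


set_option maxHeartbeats 1000000 in
/-- for densities `f` with respect to a Bernoulli product measure `ν`
with marginals in `[α,β] ⊆ (0,1)`, the expectation of `η(x) − r` against `f dν` is
bounded by `(C/A)·I_x^r(√f,ν) + C·A + C·|p_x − r|` for every `A > 0`. -/
theorem stmt_8 (α β r : ℝ) (h0 : 0 < α) (hab : α ≤ β) (h1 : β < 1)
    (hr : r ∈ Set.Ioo (0:ℝ) 1) :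
    ∃ C : ℝ, 0 < C ∧ ∀ N : ℕ, 2 ≤ N →
      ∀ p : {x : ℕ // x ∈ Finset.Icc 1 (N - 1)} → ℝ, (∀ z, p z ∈ Set.Icc α β) →
      ∀ f : Config N → ℝ, (∀ η, 0 ≤ f η) →
        (∑ η : Config N, f η * bernoulliProduct N p η) = 1 →
        ∀ x : {x : ℕ // x ∈ Finset.Icc 1 (N - 1)}, ∀ A : ℝ, 0 < A →
          |∑ η : Config N, ((if η x then (1:ℝ) else 0) - r) * f η * bernoulliProduct N p η|
            ≤ (C / A) * (∑ η : Config N, flipRate N r x η *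
                  (Real.sqrt (f (flipAt N x η)) - Real.sqrt (f η)) ^ 2 * bernoulliProduct N p η)
              + C * A + C * |p x - r| := by
  have hβ1 : (0:ℝ) < 1 - β := by linarith
  refine ⟨1/(1-β), by positivity, ?_⟩
  intro N hN p hp f hf hsum x A hA
  have hnn : ∀ z, 0 < p z := fun z => lt_of_lt_of_le h0 (hp z).1
  have hpβ : ∀ z, p z ≤ β := fun z => (hp z).2
  have hpt : ∀ η : Config N,
      |tFun N p r f x η + tFun N p r f x (flipAt N x η)| ≤
      (1/(1-β))/A * (rFun N p r f x η + rFun N p r f x (flipAt N x η))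
      + ((1/(1-β))*A + (1/(1-β)) * |p x - r|)
        * (gFun N p f η + gFun N p f (flipAt N x η)) :=
    fun η => pointwise β r h1 hr.1 hr.2 N p x hnn hpβ f hf A hA η
  have hS2 : (2:ℝ) * (∑ η : Config N, tFun N p r f x η)
      = ∑ η : Config N, (tFun N p r f x η + tFun N p r f x (flipAt N x η)) := by
    rw [Finset.sum_add_distrib, sum_flip N x (tFun N p r f x)]; ring
  have hRsum : ∑ η : Config N, (rFun N p r f x η + rFun N p r f x (flipAt N x η))
      = 2 * ∑ η : Config N, rFun N p r f x η := by
    rw [Finset.sum_add_distrib, sum_flip N x (rFun N p r f x)]; ring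
  have hg1 : ∑ η : Config N, gFun N p f η = 1 := by
    simp only [gFun]; exact hsum
  have hGsum : ∑ η : Config N, (gFun N p f η + gFun N p f (flipAt N x η)) = 2 := by
    rw [Finset.sum_add_distrib, sum_flip N x (gFun N p f), hg1]; norm_num
  have step1 : |∑ η : Config N, (tFun N p r f x η + tFun N p r f x (flipAt N x η))|
      ≤ (1/(1-β))/A * (∑ η : Config N, (rFun N p r f x η + rFun N p r f x (flipAt N x η)))
      + ((1/(1-β))*A + (1/(1-β)) * |p x - r|)
        * (∑ η : Config N, (gFun N p f η + gFun N p f (flipAt N x η))) := by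
    refine (Finset.abs_sum_le_sum_abs _ _).trans ?_
    rw [Finset.mul_sum, Finset.mul_sum, ← Finset.sum_add_distrib]
    exact Finset.sum_le_sum fun η _ => hpt η
  rw [hRsum, hGsum, ← hS2] at step1
  rw [abs_mul, abs_two] at step1
  have hfinal : |∑ η : Config N, tFun N p r f x η|
      ≤ (1/(1-β))/A * (∑ η : Config N, rFun N p r f x η)
        + (1/(1-β))*A + (1/(1-β)) * |p x - r| := by
    set S := |∑ η : Config N, tFun N p r f x η|
    set I := ∑ η : Config N, rFun N p r f x η
    set q := |p x - r|
    linarith [step1]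
  show |∑ η : Config N, tFun N p r f x η|
      ≤ (1/(1-β) / A) * (∑ η : Config N, rFun N p r f x η)
        + (1/(1-β)) * A + (1/(1-β)) * |p x - r|
  exact hfinal
end

section
/- Let 0 < α ≤ β < 1 and let p: ℤ → [0,1] satisfy Σ_{z∈ℤ} p(z) = 1. There exists a constant C > 0, depending only on α and β, such that for every integer N ≥ 2, every family p_z ∈ [α, β] (z ∈ Λ_N = {1,...,N−1}), the Bernoulli product measure ν on Ω_N = {0,1}^{Λ_N} with ν(η(z)=1) = p_z, and every density f with respect to ν: Σ_{η∈Ω_N} (𝓛_{N,0}√f)(η) · √(f(η)) · ν(η) ≤ −(1/4)·𝓓_{N,0}(√f, ν) + C · Σ_{x,y ∈ Λ_N} p(y−x)(p_x − p_y)², where (𝓛_{N,0} g)(η) = (1/2) Σ_{x,y∈Λ_N} p(x−y)[ g(η^{x,y}) − g(η) ] and 𝓓_{N,0}(√f, ν) = (1/2) Σ_{x,y∈Λ_N} p(y−x) Σ_{η∈Ω_N} (√(f(η^{x,y})) − √(f(η)))² ν(η). -/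
/-- The configuration `η^{x,y}` obtained from `η` by exchanging the values at `x` and `y`. -/
def exchange (N : ℕ) (x y : {x : ℕ // x ∈ Finset.Icc 1 (N - 1)}) (η : Config N) : Config N :=
  fun z => if z = x then η y else if z = y then η x else η z


namespace Stmt9

open Finset

abbrev Lam (N : ℕ) := {x : ℕ // x ∈ Finset.Icc 1 (N - 1)}

variable {N : ℕ} {α β : ℝ}



lemma exchange_exchange (x y : Lam N) (η : Config N) :
    exchange N x y (exchange N x y η) = η := by
  funext z
  simp only [exchange]
  split_ifs with h1 h2 <;> simp_all

lemma exchange_symm (x y : Lam N) (η : Config N) :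
    exchange N x y η = exchange N y x η := by
  funext z
  simp only [exchange]
  split_ifs <;> simp_all

lemma exchange_self (x : Lam N) (η : Config N) : exchange N x x η = η := by
  funext z
  simp only [exchange]
  split_ifs <;> simp_all

lemma sum_exchange (x y : Lam N) (F : Config N → ℝ) :
    ∑ η : Config N, F (exchange N x y η) = ∑ η : Config N, F η :=
  Fintype.sum_bijective _ (Function.Involutive.bijective (exchange_exchange x y)) _ _
    (fun _ => rfl)

lemma bern_factor (pr : Lam N → ℝ) (x y : Lam N) (hxy : x ≠ y) (η : Config N) :
    bernoulliProduct N pr η =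
      (if η x then pr x else 1 - pr x) * ((if η y then pr y else 1 - pr y) *
        ∏ z ∈ (Finset.univ.erase x).erase y, (if η z then pr z else 1 - pr z)) := by
  rw [bernoulliProduct, ← Finset.mul_prod_erase _ _ (Finset.mem_univ x),
      ← Finset.mul_prod_erase _ _ (Finset.mem_erase.2 ⟨hxy.symm, Finset.mem_univ y⟩)]

lemma bern_exchange (pr : Lam N → ℝ) (x y : Lam N) (hxy : x ≠ y) (η : Config N) :
    bernoulliProduct N pr (exchange N x y η) =
      (if η y then pr x else 1 - pr x) * ((if η x then pr y else 1 - pr y) *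
        ∏ z ∈ (Finset.univ.erase x).erase y, (if η z then pr z else 1 - pr z)) := by
  rw [bern_factor pr x y hxy]
  have h1 : exchange N x y η x = η y := by simp [exchange]
  have h2 : exchange N x y η y = η x := by simp [exchange, hxy.symm]
  rw [h1, h2]
  congr 2
  apply Finset.prod_congr rfl
  intro z hz
  rw [Finset.mem_erase, Finset.mem_erase] at hz
  rw [show exchange N x y η z = η z by simp [exchange, hz.1, hz.2.1]]

-- pointwise AM-GM lemma
lemma ptwise (a b u v e : ℝ) (ha : 0 ≤ a) (hu : 0 ≤ u) (he : 0 ≤ e)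
    (h2 : |v - u| ≤ e * u) :
    (a - b) * (b * u - a * v) ≤ -(3/4) * ((a - b)^2 * u) + e^2 * (a^2 * u) := by
  obtain ⟨h4, h3⟩ := abs_le.mp h2
  rcases le_total 0 ((a - b) * a) with h | h
  · have t1 : (a - b) * a * (u - v) ≤ (a - b) * a * (e * u) :=
      mul_le_mul_of_nonneg_left (by linarith) h
    nlinarith [mul_nonneg hu (sq_nonneg (a - b - 2 * a * e))]
  · have t1 : (a - b) * a * (v - u) ≥ (a - b) * a * (e * u) :=
      mul_le_mul_of_nonpos_left h3 h
    nlinarith [mul_nonneg hu (sq_nonneg (a - b + 2 * a * e))]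

variable {α β : ℝ}

lemma w_bounds (h0 : 0 < α) (hab : α ≤ β) (h1 : β < 1)
    {pz : ℝ} (hpz : pz ∈ Set.Icc α β) (b : Bool) :
    min α (1 - β) ≤ (if b then pz else 1 - pz) ∧
      (if b then pz else 1 - pz) ≤ max β (1 - α) := by
  obtain ⟨hl, hr⟩ := hpz
  cases b
  · simp only [Bool.false_eq_true, if_false]
    exact ⟨le_trans (min_le_right _ _) (by linarith),
      le_trans (by linarith) (le_max_right _ _)⟩
  · simp only [if_true]
    exact ⟨le_trans (min_le_left _ _) hl, le_trans hr (le_max_left _ _)⟩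

lemma bern_pos (h0 : 0 < α) (hab : α ≤ β) (h1 : β < 1)
    {pr : Lam N → ℝ} (hpr : ∀ z, pr z ∈ Set.Icc α β) (η : Config N) :
    0 < bernoulliProduct N pr η := by
  apply Finset.prod_pos
  intro z _
  have hm : 0 < min α (1 - β) := lt_min h0 (by linarith)
  linarith [(w_bounds h0 hab h1 (hpr z) (η z)).1]

lemma bern_exchange_le (h0 : 0 < α) (hab : α ≤ β) (h1 : β < 1)
    {pr : Lam N → ℝ} (hpr : ∀ z, pr z ∈ Set.Icc α β) (x y : Lam N) (η : Config N) :
    bernoulliProduct N pr (exchange N x y η) * (min α (1 - β))^2 ≤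
      bernoulliProduct N pr η * (max β (1 - α))^2 := by
  have hm : 0 < min α (1 - β) := lt_min h0 (by linarith)
  have hmM : min α (1 - β) ≤ max β (1 - α) :=
    le_trans (le_trans (min_le_left _ _) hab) (le_max_left _ _)
  by_cases hxy : x = y
  · subst hxy
    rw [exchange_self]
    have hν := bern_pos h0 hab h1 hpr η
    have hsq : (min α (1 - β))^2 ≤ (max β (1 - α))^2 := by nlinarith
    nlinarith
  · rw [bern_factor pr x y hxy η, bern_exchange pr x y hxy η]
    have hRpos : (0:ℝ) ≤ ∏ z ∈ (Finset.univ.erase x).erase y,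
        (if η z then pr z else 1 - pr z) :=
      Finset.prod_nonneg fun z _ => le_trans hm.le (w_bounds h0 hab h1 (hpr z) (η z)).1
    obtain ⟨hA1, hA2⟩ := w_bounds h0 hab h1 (hpr x) (η x)
    obtain ⟨hB1, hB2⟩ := w_bounds h0 hab h1 (hpr y) (η y)
    obtain ⟨hA1', hA2'⟩ := w_bounds h0 hab h1 (hpr x) (η y)
    obtain ⟨hB1', hB2'⟩ := w_bounds h0 hab h1 (hpr y) (η x)
    generalize (∏ z ∈ (Finset.univ.erase x).erase y,
        (if η z then pr z else 1 - pr z)) = R at *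
    generalize (if η x then pr x else 1 - pr x) = A at *
    generalize (if η y then pr y else 1 - pr y) = B at *
    generalize (if η y then pr x else 1 - pr x) = A' at *
    generalize (if η x then pr y else 1 - pr y) = B' at *
    have h1' : A' * (B' * R) ≤ max β (1 - α) * (max β (1 - α) * R) :=
      mul_le_mul hA2' (mul_le_mul_of_nonneg_right hB2' hRpos)
        (mul_nonneg (le_trans hm.le hB1') hRpos) (le_trans hm.le (le_trans hA1' hA2'))
    have h2' : min α (1 - β) * (min α (1 - β) * R) ≤ A * (B * R) :=
      mul_le_mul hA1 (mul_le_mul_of_nonneg_right hB1 hRpos)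
        (mul_nonneg hm.le hRpos) (le_trans hm.le hA1)
    nlinarith [mul_le_mul_of_nonneg_right h1' (sq_nonneg (min α (1 - β))),
      mul_le_mul_of_nonneg_left h2' (sq_nonneg (max β (1 - α)))]

lemma bern_exchange_diff (h0 : 0 < α) (hab : α ≤ β) (h1 : β < 1)
    {pr : Lam N → ℝ} (hpr : ∀ z, pr z ∈ Set.Icc α β) (x y : Lam N) (η : Config N) :
    |bernoulliProduct N pr (exchange N x y η) - bernoulliProduct N pr η| * (min α (1 - β))^2 ≤
      |pr x - pr y| * bernoulliProduct N pr η := by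
  have hm : 0 < min α (1 - β) := lt_min h0 (by linarith)
  have habs : 0 ≤ |pr x - pr y| := abs_nonneg _
  by_cases hxy : x = y
  · subst hxy
    rw [exchange_self, sub_self, abs_zero, zero_mul]
    exact mul_nonneg habs (bern_pos h0 hab h1 hpr η).le
  · rw [bern_factor pr x y hxy η, bern_exchange pr x y hxy η]
    have hRpos : (0:ℝ) ≤ ∏ z ∈ (Finset.univ.erase x).erase y,
        (if η z then pr z else 1 - pr z) :=
      Finset.prod_nonneg fun z _ => le_trans hm.le (w_bounds h0 hab h1 (hpr z) (η z)).1
    obtain ⟨hx1, hx2⟩ := hpr x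
    obtain ⟨hy1, hy2⟩ := hpr y
    have hmx : min α (1 - β) ≤ pr x := le_trans (min_le_left _ _) hx1
    have hmy : min α (1 - β) ≤ pr y := le_trans (min_le_left _ _) hy1
    have hmx' : min α (1 - β) ≤ 1 - pr x := le_trans (min_le_right _ _) (by linarith)
    have hmy' : min α (1 - β) ≤ 1 - pr y := le_trans (min_le_right _ _) (by linarith)
    generalize hRdef : (∏ z ∈ (Finset.univ.erase x).erase y,
        (if η z then pr z else 1 - pr z)) = R at *
    cases hx : η x <;> cases hy : η y <;>
      simp only [hx, hy, if_true, if_false, Bool.false_eq_true]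
    · rw [sub_self, abs_zero, zero_mul]
      exact mul_nonneg habs (mul_nonneg (by linarith) (mul_nonneg (by linarith) hRpos))
    · rw [show (pr x) * ((1 - pr y) * R) - (1 - pr x) * (pr y * R) = (pr x - pr y) * R by ring,
        abs_mul, abs_of_nonneg hRpos]
      nlinarith [mul_nonneg (mul_nonneg habs hRpos)
        (sub_nonneg.2 (show (min α (1 - β))^2 ≤ (1 - pr x) * pr y by nlinarith))]
    · rw [show (1 - pr x) * (pr y * R) - pr x * ((1 - pr y) * R) = (pr y - pr x) * R by ring,
        abs_mul, abs_of_nonneg hRpos, abs_sub_comm (pr y) (pr x)]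
      nlinarith [mul_nonneg (mul_nonneg habs hRpos)
        (sub_nonneg.2 (show (min α (1 - β))^2 ≤ pr x * (1 - pr y) by nlinarith))]
    · rw [sub_self, abs_zero, zero_mul]
      exact mul_nonneg habs (mul_nonneg (by linarith) (mul_nonneg (by linarith) hRpos))



lemma pair_bound (h0 : 0 < α) (hab : α ≤ β) (h1 : β < 1)
    {pr : Lam N → ℝ} (hpr : ∀ z, pr z ∈ Set.Icc α β)
    (f : Config N → ℝ) (hf : ∀ η, 0 ≤ f η)
    (hsum : (∑ η : Config N, f η * bernoulliProduct N pr η) = 1) (x y : Lam N) :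
    ∑ η : Config N, (Real.sqrt (f (exchange N x y η)) - Real.sqrt (f η)) * Real.sqrt (f η)
        * bernoulliProduct N pr η
      ≤ -(3/8) * ∑ η : Config N, (Real.sqrt (f (exchange N x y η)) - Real.sqrt (f η))^2
            * bernoulliProduct N pr η
        + (max β (1 - α))^2 / (2 * (min α (1 - β))^6) * (pr x - pr y)^2 := by
  have hm : 0 < min α (1 - β) := lt_min h0 (by linarith)
  set e : ℝ := |pr x - pr y| / (min α (1 - β))^2 with he_def
  have he : 0 ≤ e := div_nonneg (abs_nonneg _) (sq_nonneg _)
  -- reindexing identity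
  have hS' : ∑ η : Config N, (Real.sqrt (f η) - Real.sqrt (f (exchange N x y η)))
        * Real.sqrt (f (exchange N x y η)) * bernoulliProduct N pr (exchange N x y η)
      = ∑ η : Config N, (Real.sqrt (f (exchange N x y η)) - Real.sqrt (f η))
        * Real.sqrt (f η) * bernoulliProduct N pr η := by
    rw [← sum_exchange x y (fun η => (Real.sqrt (f (exchange N x y η)) - Real.sqrt (f η))
        * Real.sqrt (f η) * bernoulliProduct N pr η)]
    exact Finset.sum_congr rfl fun η _ => by rw [exchange_exchange]
  have key : (∑ η : Config N, (Real.sqrt (f (exchange N x y η)) - Real.sqrt (f η))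
        * Real.sqrt (f η) * bernoulliProduct N pr η)
      + (∑ η : Config N, (Real.sqrt (f η) - Real.sqrt (f (exchange N x y η)))
        * Real.sqrt (f (exchange N x y η)) * bernoulliProduct N pr (exchange N x y η))
      ≤ ∑ η : Config N,
          (-(3/4) * ((Real.sqrt (f (exchange N x y η)) - Real.sqrt (f η))^2
              * bernoulliProduct N pr η)
            + e^2 * ((Real.sqrt (f (exchange N x y η)))^2 * bernoulliProduct N pr η)) := by
    rw [← Finset.sum_add_distrib]
    apply Finset.sum_le_sum
    intro η _
    have hν := bern_pos h0 hab h1 hpr η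
    have hE : |bernoulliProduct N pr (exchange N x y η) - bernoulliProduct N pr η|
        ≤ e * bernoulliProduct N pr η := by
      rw [he_def, div_mul_eq_mul_div, le_div_iff₀ (by positivity)]
      exact bern_exchange_diff h0 hab h1 hpr x y η
    have hpt := ptwise (Real.sqrt (f (exchange N x y η))) (Real.sqrt (f η))
      (bernoulliProduct N pr η) (bernoulliProduct N pr (exchange N x y η)) e
      (Real.sqrt_nonneg _) hν.le he hE
    nlinarith [hpt]
  rw [hS'] at key
  have hsplit : ∑ η : Config N,
        (-(3/4) * ((Real.sqrt (f (exchange N x y η)) - Real.sqrt (f η))^2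
            * bernoulliProduct N pr η)
          + e^2 * ((Real.sqrt (f (exchange N x y η)))^2 * bernoulliProduct N pr η))
      = -(3/4) * (∑ η : Config N, (Real.sqrt (f (exchange N x y η)) - Real.sqrt (f η))^2
            * bernoulliProduct N pr η)
        + e^2 * (∑ η : Config N, (Real.sqrt (f (exchange N x y η)))^2
            * bernoulliProduct N pr η) := by
    rw [Finset.sum_add_distrib, ← Finset.mul_sum, ← Finset.mul_sum]
  rw [hsplit] at key
  -- bound T
  have hT : (∑ η : Config N, (Real.sqrt (f (exchange N x y η)))^2 * bernoulliProduct N pr η)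
      ≤ (max β (1 - α))^2 / (min α (1 - β))^2 := by
    have h1' : ∑ η : Config N, (Real.sqrt (f η))^2 * bernoulliProduct N pr (exchange N x y η)
        = ∑ η : Config N, (Real.sqrt (f (exchange N x y η)))^2 * bernoulliProduct N pr η := by
      rw [← sum_exchange x y (fun η => (Real.sqrt (f (exchange N x y η)))^2
          * bernoulliProduct N pr η)]
      exact Finset.sum_congr rfl fun η _ => by rw [exchange_exchange]
    rw [← h1']
    calc ∑ η : Config N, (Real.sqrt (f η))^2 * bernoulliProduct N pr (exchange N x y η)
        ≤ ∑ η : Config N, (Real.sqrt (f η))^2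
            * ((max β (1 - α))^2 / (min α (1 - β))^2 * bernoulliProduct N pr η) := by
          apply Finset.sum_le_sum
          intro η _
          apply mul_le_mul_of_nonneg_left _ (sq_nonneg _)
          rw [div_mul_eq_mul_div, le_div_iff₀ (by positivity)]
          calc bernoulliProduct N pr (exchange N x y η) * (min α (1 - β))^2
              ≤ bernoulliProduct N pr η * (max β (1 - α))^2 :=
                bern_exchange_le h0 hab h1 hpr x y η
            _ = (max β (1 - α))^2 * bernoulliProduct N pr η := mul_comm _ _
      _ = (max β (1 - α))^2 / (min α (1 - β))^2
            * ∑ η : Config N, (Real.sqrt (f η))^2 * bernoulliProduct N pr η := by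
          rw [Finset.mul_sum]
          exact Finset.sum_congr rfl fun η _ => by ring
      _ = (max β (1 - α))^2 / (min α (1 - β))^2 := by
          rw [show ∑ η : Config N, (Real.sqrt (f η))^2 * bernoulliProduct N pr η
              = ∑ η : Config N, f η * bernoulliProduct N pr η from
            Finset.sum_congr rfl fun η _ => by rw [Real.sq_sqrt (hf η)], hsum, mul_one]
  have hT2 : e^2 * (∑ η : Config N, (Real.sqrt (f (exchange N x y η)))^2
        * bernoulliProduct N pr η)
      ≤ e^2 * ((max β (1 - α))^2 / (min α (1 - β))^2) :=
    mul_le_mul_of_nonneg_left hT (sq_nonneg _)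
  have hcoef : e^2 * ((max β (1 - α))^2 / (min α (1 - β))^2)
      = 2 * ((max β (1 - α))^2 / (2 * (min α (1 - β))^6) * (pr x - pr y)^2) := by
    rw [he_def, div_pow, sq_abs]
    field_simp
  linarith

end Stmt9

open Stmt9 in
/-- estimate of `⟨𝓛_{N,0}√f, √f⟩_ν` in terms of the bulk Dirichlet form
`𝓓_{N,0}(√f,ν)` for the exclusion process with long jumps given by a transition
probability `p` on `ℤ`, with an error controlled by `Σ p(y−x)(p_x − p_y)²`. -/
theorem stmt_9 (α β : ℝ) (h0 : 0 < α) (hab : α ≤ β) (h1 : β < 1)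
    (p : ℤ → ℝ) (hp01 : ∀ z, p z ∈ Set.Icc (0:ℝ) 1) (hp1 : ∑' z : ℤ, p z = 1) :
    ∃ C : ℝ, 0 < C ∧ ∀ N : ℕ, 2 ≤ N →
      ∀ pr : {x : ℕ // x ∈ Finset.Icc 1 (N - 1)} → ℝ, (∀ z, pr z ∈ Set.Icc α β) →
      ∀ f : Config N → ℝ, (∀ η, 0 ≤ f η) →
        (∑ η : Config N, f η * bernoulliProduct N pr η) = 1 →
        ∑ η : Config N,
            ((1 / 2) * ∑ x : {x : ℕ // x ∈ Finset.Icc 1 (N - 1)},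
              ∑ y : {x : ℕ // x ∈ Finset.Icc 1 (N - 1)},
                p ((x.1 : ℤ) - (y.1 : ℤ)) *
                  (Real.sqrt (f (exchange N x y η)) - Real.sqrt (f η)))
              * Real.sqrt (f η) * bernoulliProduct N pr η
          ≤ -(1 / 4) * ((1 / 2) * ∑ x : {x : ℕ // x ∈ Finset.Icc 1 (N - 1)},
              ∑ y : {x : ℕ // x ∈ Finset.Icc 1 (N - 1)},
                p ((y.1 : ℤ) - (x.1 : ℤ)) *
                  ∑ η : Config N,
                    (Real.sqrt (f (exchange N x y η)) - Real.sqrt (f η)) ^ 2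
                      * bernoulliProduct N pr η)
            + C * ∑ x : {x : ℕ // x ∈ Finset.Icc 1 (N - 1)},
                ∑ y : {x : ℕ // x ∈ Finset.Icc 1 (N - 1)},
                  p ((y.1 : ℤ) - (x.1 : ℤ)) * (pr x - pr y) ^ 2 := by
  have hm : 0 < min α (1 - β) := lt_min h0 (by linarith)
  have hM : 0 < max β (1 - α) := lt_of_lt_of_le h0 (le_trans hab (le_max_left _ _))
  refine ⟨(max β (1 - α))^2 / (2 * (min α (1 - β))^6), by positivity, ?_⟩
  intro N hN pr hpr f hf hsum
  set c0 : ℝ := (max β (1 - α))^2 / (2 * (min α (1 - β))^6) with hc0_def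
  have hc0 : 0 < c0 := by positivity
  -- Step 1: rewrite the LHS as a double sum of pair terms
  have hLHS : ∑ η : Config N,
        ((1 / 2) * ∑ x : Lam N, ∑ y : Lam N,
          p ((x.1 : ℤ) - (y.1 : ℤ)) *
            (Real.sqrt (f (exchange N x y η)) - Real.sqrt (f η)))
          * Real.sqrt (f η) * bernoulliProduct N pr η
      = (1 / 2) * ∑ x : Lam N, ∑ y : Lam N, p ((x.1 : ℤ) - (y.1 : ℤ)) *
          ∑ η : Config N, (Real.sqrt (f (exchange N x y η)) - Real.sqrt (f η))
            * Real.sqrt (f η) * bernoulliProduct N pr η := by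
    calc ∑ η : Config N,
        ((1 / 2) * ∑ x : Lam N, ∑ y : Lam N,
          p ((x.1 : ℤ) - (y.1 : ℤ)) *
            (Real.sqrt (f (exchange N x y η)) - Real.sqrt (f η)))
          * Real.sqrt (f η) * bernoulliProduct N pr η
        = ∑ η : Config N, ∑ x : Lam N, ∑ y : Lam N,
            (1 / 2) * (p ((x.1 : ℤ) - (y.1 : ℤ)) *
              ((Real.sqrt (f (exchange N x y η)) - Real.sqrt (f η))
                * Real.sqrt (f η) * bernoulliProduct N pr η)) := by
          apply Finset.sum_congr rfl
          intro η _
          rw [mul_assoc, mul_assoc, Finset.sum_mul, Finset.mul_sum]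
          apply Finset.sum_congr rfl
          intro x _
          rw [Finset.sum_mul, Finset.mul_sum]
          apply Finset.sum_congr rfl
          intro y _
          ring
      _ = ∑ x : Lam N, ∑ η : Config N, ∑ y : Lam N,
            (1 / 2) * (p ((x.1 : ℤ) - (y.1 : ℤ)) *
              ((Real.sqrt (f (exchange N x y η)) - Real.sqrt (f η))
                * Real.sqrt (f η) * bernoulliProduct N pr η)) := Finset.sum_comm
      _ = ∑ x : Lam N, ∑ y : Lam N, ∑ η : Config N,
            (1 / 2) * (p ((x.1 : ℤ) - (y.1 : ℤ)) *
              ((Real.sqrt (f (exchange N x y η)) - Real.sqrt (f η))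
                * Real.sqrt (f η) * bernoulliProduct N pr η)) :=
          Finset.sum_congr rfl fun x _ => Finset.sum_comm
      _ = (1 / 2) * ∑ x : Lam N, ∑ y : Lam N, p ((x.1 : ℤ) - (y.1 : ℤ)) *
            ∑ η : Config N, (Real.sqrt (f (exchange N x y η)) - Real.sqrt (f η))
              * Real.sqrt (f η) * bernoulliProduct N pr η := by
          rw [Finset.mul_sum]
          apply Finset.sum_congr rfl
          intro x _
          rw [Finset.mul_sum]
          apply Finset.sum_congr rfl
          intro y _
          rw [Finset.mul_sum, Finset.mul_sum]
  rw [hLHS]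
  -- Step 2: swap p(x-y) into p(y-x) using symmetry of the exchange
  have hswap : ∑ x : Lam N, ∑ y : Lam N, p ((x.1 : ℤ) - (y.1 : ℤ)) *
        ∑ η : Config N, (Real.sqrt (f (exchange N x y η)) - Real.sqrt (f η))
          * Real.sqrt (f η) * bernoulliProduct N pr η
      = ∑ x : Lam N, ∑ y : Lam N, p ((y.1 : ℤ) - (x.1 : ℤ)) *
        ∑ η : Config N, (Real.sqrt (f (exchange N x y η)) - Real.sqrt (f η))
          * Real.sqrt (f η) * bernoulliProduct N pr η := by
    rw [Finset.sum_comm]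
    apply Finset.sum_congr rfl
    intro x _
    apply Finset.sum_congr rfl
    intro y _
    congr 1
    apply Finset.sum_congr rfl
    intro η _
    rw [exchange_symm]
  rw [hswap]
  -- Step 3: apply the pair bound
  have hp0 : ∀ z : ℤ, 0 ≤ p z := fun z => (hp01 z).1
  have step3 : (1 / 2 : ℝ) * (∑ x : Lam N, ∑ y : Lam N, p ((y.1 : ℤ) - (x.1 : ℤ)) *
        ∑ η : Config N, (Real.sqrt (f (exchange N x y η)) - Real.sqrt (f η))
          * Real.sqrt (f η) * bernoulliProduct N pr η)
      ≤ (1 / 2 : ℝ) * ∑ x : Lam N, ∑ y : Lam N, p ((y.1 : ℤ) - (x.1 : ℤ)) *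
        (-(3/8) * ∑ η : Config N, (Real.sqrt (f (exchange N x y η)) - Real.sqrt (f η))^2
            * bernoulliProduct N pr η
          + c0 * (pr x - pr y)^2) := by
    apply mul_le_mul_of_nonneg_left _ (by norm_num)
    apply Finset.sum_le_sum
    intro x _
    apply Finset.sum_le_sum
    intro y _
    exact mul_le_mul_of_nonneg_left (pair_bound h0 hab h1 hpr f hf hsum x y) (hp0 _)
  refine le_trans step3 ?_
  -- Step 4: split the sums and conclude
  have hsplit : (1 / 2 : ℝ) * ∑ x : Lam N, ∑ y : Lam N, p ((y.1 : ℤ) - (x.1 : ℤ)) *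
        (-(3/8) * ∑ η : Config N, (Real.sqrt (f (exchange N x y η)) - Real.sqrt (f η))^2
            * bernoulliProduct N pr η
          + c0 * (pr x - pr y)^2)
      = -(3/16) * (∑ x : Lam N, ∑ y : Lam N, p ((y.1 : ℤ) - (x.1 : ℤ)) *
          ∑ η : Config N, (Real.sqrt (f (exchange N x y η)) - Real.sqrt (f η))^2
            * bernoulliProduct N pr η)
        + (c0 / 2) * (∑ x : Lam N, ∑ y : Lam N,
            p ((y.1 : ℤ) - (x.1 : ℤ)) * (pr x - pr y)^2) := by
    rw [Finset.mul_sum, Finset.mul_sum, Finset.mul_sum]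
    rw [← Finset.sum_add_distrib]
    apply Finset.sum_congr rfl
    intro x _
    rw [Finset.mul_sum, Finset.mul_sum, Finset.mul_sum, ← Finset.sum_add_distrib]
    apply Finset.sum_congr rfl
    intro y _
    ring
  rw [hsplit]
  have hD : 0 ≤ ∑ x : Lam N, ∑ y : Lam N, p ((y.1 : ℤ) - (x.1 : ℤ)) *
      ∑ η : Config N, (Real.sqrt (f (exchange N x y η)) - Real.sqrt (f η))^2
        * bernoulliProduct N pr η :=
    Finset.sum_nonneg fun x _ => Finset.sum_nonneg fun y _ =>
      mul_nonneg (hp0 _) (Finset.sum_nonneg fun η _ =>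
        mul_nonneg (sq_nonneg _) (bern_pos h0 hab h1 hpr η).le)
  have hQ : 0 ≤ c0 * (∑ x : Lam N, ∑ y : Lam N,
      p ((y.1 : ℤ) - (x.1 : ℤ)) * (pr x - pr y)^2) :=
    mul_nonneg hc0.le (Finset.sum_nonneg fun x _ => Finset.sum_nonneg fun y _ =>
      mul_nonneg (hp0 _) (sq_nonneg _))
  linarith
end

section
/- Let 0 < α ≤ β < 1, θ ∈ ℝ, κ > 0, and let p: ℤ → [0,1] satisfy Σ_{z∈ℤ} p(z) = 1. There exists a constant C > 0, depending only on α and β, such that for every integer N ≥ 2, every family p_z ∈ [α, β] (z ∈ Λ_N = {1,...,N−1}), the Bernoulli product measure ν on Ω_N = {0,1}^{Λ_N} with ν(η(z)=1) = p_z, and every density f with respect to ν: Σ_{η∈Ω_N}(𝓛_{N,b}√f)(η)·√(f(η))·ν(η) ≤ −(1/4)·𝓓_{N,b}(√f, ν) + (Cκ/N^θ)·[ Σ_{x∈Λ_N} (p_x − α)² p(x) + Σ_{x∈Λ_N} (p_x − β)² p(N−x) ], where (𝓛_{N,b} g)(η) = (κ/N^θ) Σ_{x∈Λ_N} [ p(x)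 c_x(η;α) + p(N−x) c_x(η;β) ]·[ g(η^x) − g(η) ] and 𝓓_{N,b}(√f, ν) = (κ/N^θ) Σ_{x∈Λ_N} [ p(x) I_x^α(√f,ν) + p(N−x) I_x^β(√f,ν) ]. -/
/-- The single-site boundary Dirichlet form `I_x^r(√f, ν)`. -/
noncomputable def Ixr (N : ℕ) (r : ℝ) (x : {x : ℕ // x ∈ Finset.Icc 1 (N - 1)})
    (f : Config N → ℝ) (p : {x : ℕ // x ∈ Finset.Icc 1 (N - 1)} → ℝ) : ℝ :=
  ∑ η : Config N, flipRate N r x η *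
    (Real.sqrt (f (flipAt N x η)) - Real.sqrt (f η)) ^ 2 * bernoulliProduct N p η

set_option maxHeartbeats 1000000

namespace Stmt10Aux

abbrev Site (N : ℕ) := {x : ℕ // x ∈ Finset.Icc 1 (N - 1)}

lemma flipAt_flipAt {N : ℕ} (x : Site N) (η : Config N) :
    flipAt N x (flipAt N x η) = η := by
  funext z
  by_cases h : z = x <;> simp [flipAt, h]

lemma flipAt_apply_self {N : ℕ} (x : Site N) (η : Config N) :
    flipAt N x η x = !(η x) := by simp [flipAt]

lemma sum_flip {N : ℕ} (x : Site N) (F : Config N → ℝ) :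
    ∑ η : Config N, F (flipAt N x η) = ∑ η : Config N, F η :=
  Fintype.sum_bijective (flipAt N x)
    (Function.Involutive.bijective (flipAt_flipAt x)) _ _ (fun _ => rfl)

noncomputable def restProd {N : ℕ} (pr : Site N → ℝ) (x : Site N) (η : Config N) : ℝ :=
  ∏ z ∈ Finset.univ.erase x, (if η z then pr z else 1 - pr z)

lemma bp_factor {N : ℕ} (pr : Site N → ℝ) (x : Site N) (η : Config N) :
    bernoulliProduct N pr η = (if η x then pr x else 1 - pr x) * restProd pr x η :=
  (Finset.mul_prod_erase Finset.univ _ (Finset.mem_univ x)).symm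

lemma restProd_flip {N : ℕ} (pr : Site N → ℝ) (x : Site N) (η : Config N) :
    restProd pr x (flipAt N x η) = restProd pr x η :=
  Finset.prod_congr rfl fun z hz => by
    have h : z ≠ x := Finset.ne_of_mem_erase hz
    simp [flipAt, h]

lemma key_ineq (m c1 p1 u a b : ℝ) (hm : 0 < m)
    (hc : m / 2 ≤ c1) (hp : m ≤ p1) (hu : 0 ≤ u) :
    c1 * (b - a) * a * (p1 * u) + (1 / 2 - c1) * (a - b) * b * ((1 - p1) * u)
      ≤ -(1 / 2) * (c1 * (b - a) ^ 2 * (p1 * u))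
        + (2 * (c1 * p1 - (1 / 2 - c1) * (1 - p1)) ^ 2 / m ^ 2) * (u * b ^ 2) := by
  set δ := c1 * p1 - (1 / 2 - c1) * (1 - p1) with hδ
  set X := b - a with hX
  have hm2 : (0:ℝ) < m ^ 2 := by positivity
  have h1 : c1 * (b - a) * a * (p1 * u) + (1 / 2 - c1) * (a - b) * b * ((1 - p1) * u)
      = -(c1 * p1 * u * X ^ 2) + u * (X * b * δ) := by rw [hδ, hX]; ring
  have e : m ^ 2 / 8 * X ^ 2 + 2 / m ^ 2 * (b * δ) ^ 2 - X * b * δ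
      = (m ^ 2 * X - 4 * (b * δ)) ^ 2 / (8 * m ^ 2) := by
    field_simp
    ring
  have h3 : X * b * δ ≤ m ^ 2 / 8 * X ^ 2 + 2 / m ^ 2 * (b * δ) ^ 2 := by
    have h0 := div_nonneg (sq_nonneg (m ^ 2 * X - 4 * (b * δ))) (by positivity : (0:ℝ) ≤ 8 * m ^ 2)
    linarith [e]
  have h4 : u * (X * b * δ) ≤ u * (m ^ 2 / 8 * X ^ 2) + u * (2 / m ^ 2 * (b * δ) ^ 2) := by
    have := mul_le_mul_of_nonneg_left h3 hu
    rw [mul_add] at this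
    exact this
  have hcp : m ^ 2 / 4 ≤ c1 * p1 := by nlinarith
  have h5 : u * (m ^ 2 / 8 * X ^ 2) ≤ 1 / 2 * (c1 * X ^ 2 * (p1 * u)) := by
    nlinarith [mul_nonneg (by linarith : (0:ℝ) ≤ c1 * p1 - m ^ 2 / 4) (mul_nonneg hu (sq_nonneg X))]
  have h6 : u * (2 / m ^ 2 * (b * δ) ^ 2) = 2 * δ ^ 2 / m ^ 2 * (u * b ^ 2) := by ring
  linarith [h1, h4, h5, h6]


lemma restProd_nonneg {N : ℕ} {m : ℝ} (hm : 0 < m) (pr : Site N → ℝ)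
    (hpr : ∀ z, m ≤ pr z ∧ pr z ≤ 1 - m) (x : Site N) (η : Config N) :
    0 ≤ restProd pr x η :=
  Finset.prod_nonneg fun z _ => by
    rcases hpr z with ⟨h1, h2⟩
    split <;> linarith

lemma site_bound {N : ℕ} (m r : ℝ) (hm : 0 < m) (hrm : m ≤ r) (hr1 : r ≤ 1 - m)
    (x : Site N) (pr : Site N → ℝ) (hpr : ∀ z, m ≤ pr z ∧ pr z ≤ 1 - m)
    (f : Config N → ℝ) (hf : ∀ η, 0 ≤ f η)
    (hf1 : ∑ η : Config N, f η * bernoulliProduct N pr η = 1) :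
    ∑ η : Config N, flipRate N r x η *
        (Real.sqrt (f (flipAt N x η)) - Real.sqrt (f η)) * Real.sqrt (f η) *
        bernoulliProduct N pr η
      ≤ -(1 / 4) * Ixr N r x f pr + (pr x - r) ^ 2 / (4 * m ^ 3) := by
  have hu : ∀ η, 0 ≤ restProd pr x η := restProd_nonneg hm pr hpr x
  -- reindexed form of the sum
  have hA' : ∑ η : Config N, flipRate N r x η *
        (Real.sqrt (f (flipAt N x η)) - Real.sqrt (f η)) * Real.sqrt (f η) *
        bernoulliProduct N pr η
      = ∑ η : Config N, flipRate N r x (flipAt N x η) *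
        (Real.sqrt (f η) - Real.sqrt (f (flipAt N x η))) * Real.sqrt (f (flipAt N x η)) *
        bernoulliProduct N pr (flipAt N x η) := by
    rw [← sum_flip x (fun η => flipRate N r x η *
        (Real.sqrt (f (flipAt N x η)) - Real.sqrt (f η)) * Real.sqrt (f η) *
        bernoulliProduct N pr η)]
    exact Finset.sum_congr rfl fun η _ => by rw [flipAt_flipAt]
  -- pointwise bound for paired terms
  have hpt : ∀ η : Config N,
      flipRate N r x η * (Real.sqrt (f (flipAt N x η)) - Real.sqrt (f η)) *
          Real.sqrt (f η) * bernoulliProduct N pr η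
      + flipRate N r x (flipAt N x η) *
          (Real.sqrt (f η) - Real.sqrt (f (flipAt N x η))) *
          Real.sqrt (f (flipAt N x η)) * bernoulliProduct N pr (flipAt N x η)
      ≤ -(1 / 2) * (flipRate N r x η *
            (Real.sqrt (f (flipAt N x η)) - Real.sqrt (f η)) ^ 2 * bernoulliProduct N pr η)
        + (pr x - r) ^ 2 / (2 * m ^ 2) * (restProd pr x η * f (flipAt N x η)) := by
    intro η
    have hbsq : Real.sqrt (f (flipAt N x η)) ^ 2 = f (flipAt N x η) := Real.sq_sqrt (hf _)
    rcases hpr x with ⟨hpm, hp1⟩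
    cases h : η x with
    | true =>
      have hc1 : flipRate N r x η = (1 - r) / 2 := by simp [flipRate, h]; ring
      have hc2 : flipRate N r x (flipAt N x η) = 1 / 2 - (1 - r) / 2 := by
        simp [flipRate, flipAt_apply_self, h]; ring
      have hν1 : bernoulliProduct N pr η = pr x * restProd pr x η := by
        rw [bp_factor pr x η, h]; simp
      have hν2 : bernoulliProduct N pr (flipAt N x η) = (1 - pr x) * restProd pr x η := by
        rw [bp_factor pr x (flipAt N x η), restProd_flip, flipAt_apply_self, h]; simp
      have key := key_ineq m ((1 - r) / 2) (pr x) (restProd pr x η)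
        (Real.sqrt (f η)) (Real.sqrt (f (flipAt N x η))) hm (by linarith) hpm (hu η)
      rw [hbsq] at key
      have hco : 2 * ((1 - r) / 2 * pr x - (1 / 2 - (1 - r) / 2) * (1 - pr x)) ^ 2 / m ^ 2
          = (pr x - r) ^ 2 / (2 * m ^ 2) := by
        field_simp
        ring
      rw [hco] at key
      rw [hc1, hc2, hν1, hν2]
      exact key
    | false =>
      have hc1 : flipRate N r x η = r / 2 := by simp [flipRate, h]; ring
      have hc2 : flipRate N r x (flipAt N x η) = 1 / 2 - r / 2 := by
        simp [flipRate, flipAt_apply_self, h]; ring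
      have hν1 : bernoulliProduct N pr η = (1 - pr x) * restProd pr x η := by
        rw [bp_factor pr x η, h]; simp
      have hν2 : bernoulliProduct N pr (flipAt N x η)
          = (1 - (1 - pr x)) * restProd pr x η := by
        rw [bp_factor pr x (flipAt N x η), restProd_flip, flipAt_apply_self, h]
        norm_num
      have key := key_ineq m (r / 2) (1 - pr x) (restProd pr x η)
        (Real.sqrt (f η)) (Real.sqrt (f (flipAt N x η))) hm (by linarith)
        (by linarith) (hu η)
      rw [hbsq] at key
      have hco : 2 * (r / 2 * (1 - pr x) - (1 / 2 - r / 2) * (1 - (1 - pr x))) ^ 2 / m ^ 2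
          = (pr x - r) ^ 2 / (2 * m ^ 2) := by
        field_simp
        ring
      rw [hco] at key
      rw [hc1, hc2, hν1, hν2]
      exact key
  -- sum of the error factor
  have hEsum : ∑ η : Config N, restProd pr x η * f (flipAt N x η) ≤ 1 / m := by
    have e1 : ∑ η : Config N, restProd pr x η * f (flipAt N x η)
        = ∑ η : Config N, restProd pr x η * f η := by
      calc ∑ η : Config N, restProd pr x η * f (flipAt N x η)
          = ∑ η : Config N, restProd pr x (flipAt N x η) * f (flipAt N x η) :=
            Finset.sum_congr rfl fun η _ => by rw [restProd_flip]
        _ = ∑ η : Config N, restProd pr x η * f η :=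
            sum_flip x (fun η => restProd pr x η * f η)
    rw [e1]
    have e2 : ∀ η : Config N, restProd pr x η * f η
        ≤ 1 / m * (f η * bernoulliProduct N pr η) := by
      intro η
      have hfac : m * restProd pr x η ≤ bernoulliProduct N pr η := by
        rw [bp_factor pr x η]
        apply mul_le_mul_of_nonneg_right _ (hu η)
        rcases hpr x with ⟨h1, h2⟩
        split <;> linarith
      have h2 := mul_le_mul_of_nonneg_left hfac (hf η)
      calc restProd pr x η * f η = 1 / m * (f η * (m * restProd pr x η)) := by
            field_simp
        _ ≤ 1 / m * (f η * bernoulliProduct N pr η) := by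
            apply mul_le_mul_of_nonneg_left h2 (by positivity)
    calc ∑ η : Config N, restProd pr x η * f η
        ≤ ∑ η : Config N, 1 / m * (f η * bernoulliProduct N pr η) :=
          Finset.sum_le_sum fun η _ => e2 η
      _ = 1 / m := by rw [← Finset.mul_sum, hf1, mul_one]
  -- combine
  have h2A : 2 * (∑ η : Config N, flipRate N r x η *
        (Real.sqrt (f (flipAt N x η)) - Real.sqrt (f η)) * Real.sqrt (f η) *
        bernoulliProduct N pr η)
      ≤ -(1 / 2) * Ixr N r x f pr
        + (pr x - r) ^ 2 / (2 * m ^ 2) *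
            ∑ η : Config N, restProd pr x η * f (flipAt N x η) := by
    have := Finset.sum_le_sum (s := Finset.univ) (fun η _ => hpt η)
    rw [Finset.sum_add_distrib, Finset.sum_add_distrib, ← Finset.mul_sum, ← Finset.mul_sum]
      at this
    calc 2 * (∑ η : Config N, flipRate N r x η *
          (Real.sqrt (f (flipAt N x η)) - Real.sqrt (f η)) * Real.sqrt (f η) *
          bernoulliProduct N pr η)
        = (∑ η : Config N, flipRate N r x η *
            (Real.sqrt (f (flipAt N x η)) - Real.sqrt (f η)) * Real.sqrt (f η) *
            bernoulliProduct N pr η)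
          + ∑ η : Config N, flipRate N r x (flipAt N x η) *
            (Real.sqrt (f η) - Real.sqrt (f (flipAt N x η))) *
            Real.sqrt (f (flipAt N x η)) * bernoulliProduct N pr (flipAt N x η) := by
          rw [← hA']; ring
      _ ≤ _ := this
  have hIx : Ixr N r x f pr = ∑ η : Config N, flipRate N r x η *
      (Real.sqrt (f (flipAt N x η)) - Real.sqrt (f η)) ^ 2 * bernoulliProduct N pr η := rfl
  have hE2 : (pr x - r) ^ 2 / (2 * m ^ 2) *
      ∑ η : Config N, restProd pr x η * f (flipAt N x η)
      ≤ (pr x - r) ^ 2 / (2 * m ^ 2) * (1 / m) :=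
    mul_le_mul_of_nonneg_left hEsum (by positivity)
  have hE3 : (pr x - r) ^ 2 / (2 * m ^ 2) * (1 / m) = (pr x - r) ^ 2 / (2 * m ^ 3) := by
    rw [div_mul_div_comm, mul_one, mul_assoc, ← pow_succ]
  have hE4 : (pr x - r) ^ 2 / (2 * m ^ 3) = 2 * ((pr x - r) ^ 2 / (4 * m ^ 3)) := by ring
  linarith [h2A, hE2]

end Stmt10Aux

/-- estimate of `⟨𝓛_{N,b}√f, √f⟩_ν` in terms of the boundary Dirichlet
form `𝓓_{N,b}(√f,ν)` for the reservoir dynamics with densities `α, β` and strength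
`κN^{−θ}`, with error `(Cκ/N^θ)[Σ (p_x−α)²p(x) + Σ (p_x−β)²p(N−x)]`. -/
theorem stmt_10 (α β θ κ : ℝ) (h0 : 0 < α) (hab : α ≤ β) (h1 : β < 1) (hκ : 0 < κ)
    (p : ℤ → ℝ) (hp01 : ∀ z, p z ∈ Set.Icc (0:ℝ) 1) (hp1 : ∑' z : ℤ, p z = 1) :
    ∃ C : ℝ, 0 < C ∧ ∀ N : ℕ, 2 ≤ N →
      ∀ pr : {x : ℕ // x ∈ Finset.Icc 1 (N - 1)} → ℝ, (∀ z, pr z ∈ Set.Icc α β) →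
      ∀ f : Config N → ℝ, (∀ η, 0 ≤ f η) →
        (∑ η : Config N, f η * bernoulliProduct N pr η) = 1 →
        ∑ η : Config N,
            ((κ / (N:ℝ) ^ θ) * ∑ x : {x : ℕ // x ∈ Finset.Icc 1 (N - 1)},
              (p (x.1 : ℤ) * flipRate N α x η + p ((N : ℤ) - (x.1 : ℤ)) * flipRate N β x η) *
                (Real.sqrt (f (flipAt N x η)) - Real.sqrt (f η)))
              * Real.sqrt (f η) * bernoulliProduct N pr η
          ≤ -(1 / 4) * ((κ / (N:ℝ) ^ θ) * ∑ x : {x : ℕ // x ∈ Finset.Icc 1 (N - 1)},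
                (p (x.1 : ℤ) * Ixr N α x f pr + p ((N : ℤ) - (x.1 : ℤ)) * Ixr N β x f pr))
            + (C * κ / (N:ℝ) ^ θ) *
                ((∑ x : {x : ℕ // x ∈ Finset.Icc 1 (N - 1)}, (pr x - α) ^ 2 * p (x.1 : ℤ))
                  + ∑ x : {x : ℕ // x ∈ Finset.Icc 1 (N - 1)},
                      (pr x - β) ^ 2 * p ((N : ℤ) - (x.1 : ℤ))) := by
  classical
  set m : ℝ := min α (1 - β) with hm_def
  have hm : 0 < m := lt_min h0 (by linarith)
  have hmα : m ≤ α := min_le_left _ _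
  have hmβ : m ≤ 1 - β := min_le_right _ _
  refine ⟨1 / (4 * m ^ 3), by positivity, ?_⟩
  intro N hN pr hpr f hf hf1
  have hN0 : (0:ℝ) < (N:ℝ) := by
    have : (0:ℕ) < N := by omega
    exact_mod_cast this
  have hNθ : (0:ℝ) < (N:ℝ) ^ θ := Real.rpow_pos_of_pos hN0 θ
  have hk : (0:ℝ) ≤ κ / (N:ℝ) ^ θ := le_of_lt (div_pos hκ hNθ)
  have hpr' : ∀ z, m ≤ pr z ∧ pr z ≤ 1 - m := fun z =>
    ⟨le_trans hmα (hpr z).1, le_trans (hpr z).2 (by linarith)⟩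
  have key : ∀ x : Stmt10Aux.Site N,
      p (x.1 : ℤ) * (∑ η : Config N, flipRate N α x η *
          (Real.sqrt (f (flipAt N x η)) - Real.sqrt (f η)) * Real.sqrt (f η) *
          bernoulliProduct N pr η)
        + p ((N : ℤ) - (x.1 : ℤ)) * (∑ η : Config N, flipRate N β x η *
          (Real.sqrt (f (flipAt N x η)) - Real.sqrt (f η)) * Real.sqrt (f η) *
          bernoulliProduct N pr η)
      ≤ -(1 / 4) * (p (x.1 : ℤ) * Ixr N α x f pr + p ((N : ℤ) - (x.1 : ℤ)) * Ixr N β x f pr)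
        + 1 / (4 * m ^ 3) *
            ((pr x - α) ^ 2 * p (x.1 : ℤ) + (pr x - β) ^ 2 * p ((N : ℤ) - (x.1 : ℤ))) := by
    intro x
    have h1 := Stmt10Aux.site_bound m α hm hmα (by linarith) x pr hpr' f hf hf1
    have h2 := Stmt10Aux.site_bound m β hm (le_trans hmα hab) (by linarith) x pr hpr' f hf hf1
    have hp0 : 0 ≤ p (x.1 : ℤ) := (hp01 (x.1 : ℤ)).1
    have hp0' : 0 ≤ p ((N : ℤ) - (x.1 : ℤ)) := (hp01 _).1
    have b1 := mul_le_mul_of_nonneg_left h1 hp0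
    have b2 := mul_le_mul_of_nonneg_left h2 hp0'
    have e1 : p (x.1 : ℤ) * (-(1 / 4) * Ixr N α x f pr + (pr x - α) ^ 2 / (4 * m ^ 3))
        + p ((N : ℤ) - (x.1 : ℤ)) * (-(1 / 4) * Ixr N β x f pr + (pr x - β) ^ 2 / (4 * m ^ 3))
        = -(1 / 4) * (p (x.1 : ℤ) * Ixr N α x f pr
            + p ((N : ℤ) - (x.1 : ℤ)) * Ixr N β x f pr)
          + 1 / (4 * m ^ 3) *
            ((pr x - α) ^ 2 * p (x.1 : ℤ)
              + (pr x - β) ^ 2 * p ((N : ℤ) - (x.1 : ℤ))) := by ring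
    linarith [b1, b2]
  have hswap : ∑ η : Config N,
      ((κ / (N:ℝ) ^ θ) * ∑ x : {x : ℕ // x ∈ Finset.Icc 1 (N - 1)},
        (p (x.1 : ℤ) * flipRate N α x η + p ((N : ℤ) - (x.1 : ℤ)) * flipRate N β x η) *
          (Real.sqrt (f (flipAt N x η)) - Real.sqrt (f η)))
        * Real.sqrt (f η) * bernoulliProduct N pr η
      = (κ / (N:ℝ) ^ θ) * ∑ x : Stmt10Aux.Site N,
          (p (x.1 : ℤ) * (∑ η : Config N, flipRate N α x η *
              (Real.sqrt (f (flipAt N x η)) - Real.sqrt (f η)) * Real.sqrt (f η) *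
              bernoulliProduct N pr η)
            + p ((N : ℤ) - (x.1 : ℤ)) * (∑ η : Config N, flipRate N β x η *
              (Real.sqrt (f (flipAt N x η)) - Real.sqrt (f η)) * Real.sqrt (f η) *
              bernoulliProduct N pr η)) := by
    calc ∑ η : Config N,
        ((κ / (N:ℝ) ^ θ) * ∑ x : {x : ℕ // x ∈ Finset.Icc 1 (N - 1)},
          (p (x.1 : ℤ) * flipRate N α x η + p ((N : ℤ) - (x.1 : ℤ)) * flipRate N β x η) *
            (Real.sqrt (f (flipAt N x η)) - Real.sqrt (f η)))
          * Real.sqrt (f η) * bernoulliProduct N pr η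
        = (κ / (N:ℝ) ^ θ) * ∑ η : Config N, ∑ x : Stmt10Aux.Site N,
            ((p (x.1 : ℤ) * flipRate N α x η + p ((N : ℤ) - (x.1 : ℤ)) * flipRate N β x η) *
              (Real.sqrt (f (flipAt N x η)) - Real.sqrt (f η)) *
              (Real.sqrt (f η) * bernoulliProduct N pr η)) := by
          rw [Finset.mul_sum]
          refine Finset.sum_congr rfl fun η _ => ?_
          rw [← Finset.sum_mul]
          ring
      _ = (κ / (N:ℝ) ^ θ) * ∑ x : Stmt10Aux.Site N, ∑ η : Config N,
            ((p (x.1 : ℤ) * flipRate N α x η + p ((N : ℤ) - (x.1 : ℤ)) * flipRate N β x η) *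
              (Real.sqrt (f (flipAt N x η)) - Real.sqrt (f η)) *
              (Real.sqrt (f η) * bernoulliProduct N pr η)) := by
          rw [Finset.sum_comm]
      _ = _ := by
          refine congrArg _ (Finset.sum_congr rfl fun x _ => ?_)
          rw [Finset.mul_sum, Finset.mul_sum, ← Finset.sum_add_distrib]
          exact Finset.sum_congr rfl fun η _ => by ring
  rw [hswap]
  calc (κ / (N:ℝ) ^ θ) * ∑ x : Stmt10Aux.Site N,
        (p (x.1 : ℤ) * (∑ η : Config N, flipRate N α x η *
            (Real.sqrt (f (flipAt N x η)) - Real.sqrt (f η)) * Real.sqrt (f η) *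
            bernoulliProduct N pr η)
          + p ((N : ℤ) - (x.1 : ℤ)) * (∑ η : Config N, flipRate N β x η *
            (Real.sqrt (f (flipAt N x η)) - Real.sqrt (f η)) * Real.sqrt (f η) *
            bernoulliProduct N pr η))
      ≤ (κ / (N:ℝ) ^ θ) * ∑ x : Stmt10Aux.Site N,
          (-(1 / 4) * (p (x.1 : ℤ) * Ixr N α x f pr
              + p ((N : ℤ) - (x.1 : ℤ)) * Ixr N β x f pr)
            + 1 / (4 * m ^ 3) *
              ((pr x - α) ^ 2 * p (x.1 : ℤ)
                + (pr x - β) ^ 2 * p ((N : ℤ) - (x.1 : ℤ)))) :=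
        mul_le_mul_of_nonneg_left (Finset.sum_le_sum fun x _ => key x) hk
    _ = -(1 / 4) * ((κ / (N:ℝ) ^ θ) * ∑ x : {x : ℕ // x ∈ Finset.Icc 1 (N - 1)},
            (p (x.1 : ℤ) * Ixr N α x f pr + p ((N : ℤ) - (x.1 : ℤ)) * Ixr N β x f pr))
        + (1 / (4 * m ^ 3) * κ / (N:ℝ) ^ θ) *
            ((∑ x : {x : ℕ // x ∈ Finset.Icc 1 (N - 1)}, (pr x - α) ^ 2 * p (x.1 : ℤ))
              + ∑ x : {x : ℕ // x ∈ Finset.Icc 1 (N - 1)},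
                  (pr x - β) ^ 2 * p ((N : ℤ) - (x.1 : ℤ))) := by
        simp only [Finset.sum_add_distrib, ← Finset.mul_sum]
        ring
end

section
/- Let p: ℤ → [0,1] satisfy Σ_{z∈ℤ} p(z) = 1, p(z) = p(−z) for all z ∈ ℤ, and σ² := Σ_{z∈ℤ} z² p(z) < ∞. Let G: ℝ → ℝ be twice continuously differentiable with compact support. Then lim_{N→∞} sup_{x ∈ {1,...,N−1}} | N² Σ_{y∈ℤ} ( G((x+y)/N) − G(x/N) ) p(y) − (σ²/2)·G''(x/N) | = 0. -/
open Metric Filter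

private lemma mvt_ball {f f' : ℝ → ℝ} {r C : ℝ} (a : ℝ) (hr : 0 ≤ r)
    (hf : ∀ t, HasDerivAt f (f' t) t)
    (hC : ∀ t ∈ Metric.closedBall a r, |f' t| ≤ C)
    {b : ℝ} (hb : b ∈ Metric.closedBall a r) :
    |f b - f a| ≤ C * |b - a| := by
  have := Convex.norm_image_sub_le_of_norm_hasDerivWithin_le
    (f := f) (f' := f') (s := Metric.closedBall a r)
    (fun t _ => (hf t).hasDerivWithinAt) (fun t ht => by simpa using hC t ht)
    (convex_closedBall a r) (Metric.mem_closedBall_self hr) hb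
  simpa [Real.norm_eq_abs] using this

private lemma taylor2 {G : ℝ → ℝ} (hG : ContDiff ℝ 2 G) (a h C : ℝ)
    (hC : ∀ t ∈ Metric.closedBall a |h|, |deriv (deriv G) t - deriv (deriv G) a| ≤ C) :
    |G (a + h) - G a - deriv G a * h - deriv (deriv G) a * h ^ 2 / 2| ≤ C * h ^ 2 := by
  set g := deriv (deriv G) with hg
  have hG2 : ContDiff ℝ ((1 : ℕ) + 1) G := by exact_mod_cast hG
  have hG' : ContDiff ℝ 1 (deriv G) := (contDiff_succ_iff_deriv.mp hG2).2.2
  have hdG : Differentiable ℝ G := hG.differentiable (by norm_num)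
  have hddG : Differentiable ℝ (deriv G) := hG'.differentiable (by norm_num)
  have hC0 : 0 ≤ C := le_trans (by simp) (hC a (Metric.mem_closedBall_self (abs_nonneg h)))
  set F₁ : ℝ → ℝ := fun t => deriv G t - deriv G a - g a * (t - a) with hF₁def
  have hF₁ : ∀ t, HasDerivAt F₁ (g t - g a) t := by
    intro t
    have h1 : HasDerivAt (deriv G) (g t) t := (hddG t).hasDerivAt
    have h2 : HasDerivAt (fun u : ℝ => g a * (u - a)) (g a) t := by
      have h := ((hasDerivAt_id t).sub_const a).const_mul (g a)
      simp only [id_eq, mul_one] at h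
      exact h
    exact (h1.sub_const (deriv G a)).sub h2
  have hF₁b : ∀ t ∈ Metric.closedBall a |h|, |F₁ t| ≤ C * |h| := by
    intro t ht
    have h0 : |F₁ t - F₁ a| ≤ C * |t - a| := mvt_ball a (abs_nonneg h) hF₁ hC ht
    have hF₁a : F₁ a = 0 := by simp [hF₁def]
    have hta : |t - a| ≤ |h| := by
      have := Metric.mem_closedBall.mp ht
      simpa [Real.dist_eq] using this
    calc |F₁ t| = |F₁ t - F₁ a| := by rw [hF₁a]; ring_nf
    _ ≤ C * |t - a| := h0
    _ ≤ C * |h| := by nlinarith [abs_nonneg (t - a)]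
  set F₂ : ℝ → ℝ := fun t => G t - G a - deriv G a * (t - a) - g a * (t - a) ^ 2 / 2 with hF₂def
  have hF₂ : ∀ t, HasDerivAt F₂ (F₁ t) t := by
    intro t
    have h1 : HasDerivAt G (deriv G t) t := (hdG t).hasDerivAt
    have h2 : HasDerivAt (fun u : ℝ => deriv G a * (u - a)) (deriv G a) t := by
      have h := ((hasDerivAt_id t).sub_const a).const_mul (deriv G a)
      simp only [id_eq, mul_one] at h
      exact h
    have h3 : HasDerivAt (fun u : ℝ => g a * (u - a) ^ 2 / 2) (g a * (t - a)) t := by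
      have h := ((((hasDerivAt_id t).sub_const a).pow 2).const_mul (g a)).div_const 2
      simp only [id_eq, Pi.pow_apply] at h
      exact h.congr_deriv (by ring)
    exact ((h1.sub_const (G a)).sub h2).sub h3
  have hmem : a + h ∈ Metric.closedBall a |h| := by
    simp [Real.dist_eq]
  have h0 : |F₂ (a + h) - F₂ a| ≤ C * |h| * |a + h - a| :=
    mvt_ball a (abs_nonneg h) hF₂ hF₁b hmem
  have hF₂a : F₂ a = 0 := by simp [hF₂def]
  have hfin : |F₂ (a + h)| ≤ C * |h| * |h| := by
    rw [hF₂a] at h0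
    simpa using h0
  have hF₂ah : F₂ (a + h) = G (a + h) - G a - deriv G a * h - g a * h ^ 2 / 2 := by
    simp [hF₂def, add_sub_cancel_left]
  rw [hF₂ah] at hfin
  calc |G (a + h) - G a - deriv G a * h - g a * h ^ 2 / 2|
      ≤ C * |h| * |h| := hfin
    _ = C * h ^ 2 := by rw [mul_assoc, ← abs_mul, ← sq, abs_of_nonneg (sq_nonneg h)]

private lemma tsum_int_odd {f : ℤ → ℝ} (hodd : ∀ z, f (-z) = - f z) :
    ∑' z : ℤ, f z = 0 := by
  have h1 : ∑' z : ℤ, f ((Equiv.neg ℤ) z) = ∑' z : ℤ, f z := (Equiv.neg ℤ).tsum_eq f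
  have h2 : ∑' z : ℤ, f ((Equiv.neg ℤ) z) = - ∑' z : ℤ, f z := by
    rw [show (fun z : ℤ => f ((Equiv.neg ℤ) z)) = fun z => - f z by
      funext z; simpa using hodd z]
    exact tsum_neg
  linarith [h1, h2.symm.trans h1]

set_option maxHeartbeats 2000000 in
/-- for a symmetric probability transition function `p` on `ℤ` with
finite variance `σ² = Σ z² p(z)` and a `C²` compactly supported `G : ℝ → ℝ`, the
rescaled long-jump operator `N² Σ_y (G((x+y)/N) − G(x/N)) p(y)` converges to
`(σ²/2) G''(x/N)` uniformly over `x ∈ {1,...,N−1}`. -/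
theorem stmt_11 (p : ℤ → ℝ) (hp01 : ∀ z, p z ∈ Set.Icc (0:ℝ) 1)
    (hp1 : ∑' z : ℤ, p z = 1) (hsym : ∀ z, p z = p (-z))
    (hvar : Summable fun z : ℤ => (z:ℝ) ^ 2 * p z)
    (G : ℝ → ℝ) (hG : ContDiff ℝ 2 G) (hGc : HasCompactSupport G) :
    ∀ ε : ℝ, 0 < ε → ∃ N₀ : ℕ, ∀ N : ℕ, N₀ ≤ N → ∀ x ∈ Finset.Icc 1 (N - 1),
      |(N:ℝ) ^ 2 * (∑' y : ℤ, (G (((x:ℝ) + (y:ℝ)) / (N:ℝ)) - G ((x:ℝ) / (N:ℝ))) * p y)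
          - (∑' z : ℤ, (z:ℝ) ^ 2 * p z) / 2 * deriv (deriv G) ((x:ℝ) / (N:ℝ))| < ε := by
  intro ε hε
  classical
  have hp0 : ∀ z, 0 ≤ p z := fun z => (hp01 z).1
  have hpsum : Summable p := by
    by_contra hs
    rw [tsum_eq_zero_of_not_summable hs] at hp1
    norm_num at hp1
  set g := deriv (deriv G) with hgdef
  have hG2 : ContDiff ℝ ((1 : ℕ) + 1) G := by exact_mod_cast hG
  have hG' : ContDiff ℝ 1 (deriv G) := (contDiff_succ_iff_deriv.mp hG2).2.2
  have hgcont : Continuous g := (contDiff_one_iff_deriv.mp hG').2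
  have hgc : HasCompactSupport g := hGc.deriv.deriv
  have hgu : UniformContinuous g := hgc.uniformContinuous_of_continuous hgcont
  obtain ⟨M, hM⟩ : ∃ M, ∀ t, |g t| ≤ M := by
    simpa [Real.norm_eq_abs] using hgc.exists_bound_of_continuous hgcont
  have hM0 : 0 ≤ M := le_trans (abs_nonneg _) (hM 0)
  obtain ⟨B, hB⟩ : ∃ B, ∀ t, |G t| ≤ B := by
    simpa [Real.norm_eq_abs] using hGc.exists_bound_of_continuous hG.continuous
  set σ2 := ∑' z : ℤ, (z:ℝ) ^ 2 * p z with hσ2def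
  have hσ2 : 0 ≤ σ2 := tsum_nonneg fun z => mul_nonneg (sq_nonneg _) (hp0 z)
  set ε' := ε / (4 * (σ2 + 1)) with hε'def
  have hε' : 0 < ε' := by positivity
  obtain ⟨δ, hδ0, hδ⟩ := Metric.uniformContinuous_iff.mp hgu ε' hε'
  set η := ε / (4 * (2 * M + 1)) with hηdef
  have hη : 0 < η := by positivity
  obtain ⟨s, hs⟩ : ∃ s : Finset ℤ,
      ∑' y : ↑((s : Set ℤ))ᶜ, ((y : ℤ):ℝ) ^ 2 * p y < η := by
    have htail := tendsto_tsum_compl_atTop_zero (fun z : ℤ => (z:ℝ) ^ 2 * p z)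
    obtain ⟨s, hs⟩ := ((tendsto_order.1 htail).2 η hη).exists
    exact ⟨s, hs⟩
  set K : ℝ := ((s.sup fun y => y.natAbs : ℕ) : ℝ) with hKdef
  have hKs : ∀ y ∈ s, |(y:ℝ)| ≤ K := by
    intro y hy
    have h2 : y.natAbs ≤ s.sup fun y => y.natAbs :=
      Finset.le_sup (f := fun y : ℤ => y.natAbs) hy
    have h3 : (|y| : ℤ) ≤ ((s.sup fun y => y.natAbs : ℕ) : ℤ) := by
      rw [Int.abs_eq_natAbs]
      exact_mod_cast h2
    calc |(y:ℝ)| = ((|y| : ℤ) : ℝ) := (Int.cast_abs).symm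
    _ ≤ K := by rw [hKdef]; exact_mod_cast h3
  refine ⟨Nat.floor (K / δ) + 1, fun N hN x _ => ?_⟩
  have hN1 : 1 ≤ N := le_trans (Nat.le_add_left 1 _) hN
  have hNpos : (0:ℝ) < N := by exact_mod_cast hN1
  have hKN : K / (N:ℝ) < δ := by
    have h1 : K / δ < (N:ℝ) := by
      calc K / δ < Nat.floor (K / δ) + 1 := Nat.lt_floor_add_one _
      _ ≤ (N:ℝ) := by exact_mod_cast hN
    rw [div_lt_iff₀ hNpos]
    calc K = K / δ * δ := by field_simp
    _ < (N:ℝ) * δ := by exact mul_lt_mul_of_pos_right h1 hδ0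
    _ = δ * N := by ring
  set a : ℝ := (x:ℝ) / N with hadef
  set T : ℤ → ℝ := fun y =>
    (N:ℝ) ^ 2 * (G (a + (y:ℝ) / N) - G a) - (N:ℝ) * deriv G a * (y:ℝ)
      - g a * (y:ℝ) ^ 2 / 2 with hTdef
  -- Taylor estimates
  have key : ∀ (y : ℤ) (C : ℝ),
      (∀ t ∈ Metric.closedBall a |(y:ℝ)/N|, |g t - g a| ≤ C) → |T y| ≤ C * (y:ℝ) ^ 2 := by
    intro y C hCb
    have ht := taylor2 hG a ((y:ℝ)/N) C hCb
    have hTy : T y = (N:ℝ)^2 *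
        (G (a + (y:ℝ)/N) - G a - deriv G a * ((y:ℝ)/N) - g a * ((y:ℝ)/N) ^ 2 / 2) := by
      rw [hTdef]; field_simp
    rw [hTy, abs_mul, abs_of_nonneg (by positivity : (0:ℝ) ≤ (N:ℝ)^2)]
    calc (N:ℝ)^2 * |G (a + (y:ℝ)/N) - G a - deriv G a * ((y:ℝ)/N) - g a * ((y:ℝ)/N) ^ 2 / 2|
        ≤ (N:ℝ)^2 * (C * ((y:ℝ)/N)^2) := by
          exact mul_le_mul_of_nonneg_left ht (by positivity)
      _ = C * (y:ℝ)^2 := by field_simp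
  have boundAll : ∀ y : ℤ, |T y| ≤ 2 * M * (y:ℝ) ^ 2 := by
    intro y
    refine key y (2 * M) fun t _ => ?_
    calc |g t - g a| ≤ |g t| + |g a| := abs_sub _ _
    _ ≤ 2 * M := by linarith [hM t, hM a]
  have boundSmall : ∀ y ∈ s, |T y| ≤ ε' * (y:ℝ) ^ 2 := by
    intro y hy
    refine key y ε' fun t ht => ?_
    have h1 : dist t a ≤ |(y:ℝ)/N| := Metric.mem_closedBall.mp ht
    have h2 : |(y:ℝ)/N| ≤ K / N := by
      rw [abs_div, abs_of_pos hNpos]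
      gcongr
      exact hKs y hy
    have := hδ (show dist t a < δ by linarith)
    simpa [Real.dist_eq] using this.le
  -- Summability facts
  have hS1 : Summable fun y : ℤ => (G (a + (y:ℝ)/N) - G a) * p y := by
    refine Summable.of_abs (Summable.of_nonneg_of_le (fun y => abs_nonneg _)
      (fun y => ?_) (hpsum.mul_left (2 * B)))
    rw [abs_mul, abs_of_nonneg (hp0 y)]
    have : |G (a + (y:ℝ)/N) - G a| ≤ 2 * B := by
      calc |G (a + (y:ℝ)/N) - G a| ≤ |G (a + (y:ℝ)/N)| + |G a| := abs_sub _ _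
      _ ≤ 2 * B := by linarith [hB (a + (y:ℝ)/N), hB a]
    exact mul_le_mul_of_nonneg_right this (hp0 y)
  have hS2 : Summable fun y : ℤ => (y:ℝ) * p y := by
    refine Summable.of_abs (Summable.of_nonneg_of_le (fun y => abs_nonneg _)
      (fun y => ?_) (hvar.add hpsum))
    rw [abs_mul, abs_of_nonneg (hp0 y)]
    have h1 : |(y:ℝ)| ≤ (y:ℝ)^2 + 1 := by nlinarith [abs_nonneg (y:ℝ), sq_abs (y:ℝ)]
    calc |(y:ℝ)| * p y ≤ ((y:ℝ)^2 + 1) * p y :=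
      mul_le_mul_of_nonneg_right h1 (hp0 y)
    _ = (y:ℝ)^2 * p y + p y := by ring
  have hS2z : ∑' y : ℤ, (y:ℝ) * p y = 0 := by
    refine tsum_int_odd fun z => ?_
    rw [← hsym z]
    push_cast
    ring
  have hST : Summable fun y : ℤ => T y * p y := by
    have h := ((hS1.mul_left ((N:ℝ)^2)).sub
      (hS2.mul_left ((N:ℝ) * deriv G a))).sub (hvar.mul_left (g a / 2))
    refine h.congr fun y => ?_
    rw [hTdef]
    ring
  have hSTabs : Summable fun y : ℤ => |T y| * p y := by
    refine hST.abs.congr fun y => ?_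
    rw [abs_mul, abs_of_nonneg (hp0 y)]
  -- the main identity
  have hxy : ∀ y : ℤ, ((x:ℝ) + (y:ℝ)) / N = a + (y:ℝ)/N := fun y => add_div _ _ _
  have heq : (N:ℝ) ^ 2 * (∑' y : ℤ, (G (((x:ℝ) + (y:ℝ)) / N) - G ((x:ℝ)/N)) * p y)
      - σ2 / 2 * g ((x:ℝ)/N) = ∑' y : ℤ, T y * p y := by
    have h1 : (∑' y : ℤ, (G (((x:ℝ) + (y:ℝ)) / N) - G ((x:ℝ)/N)) * p y)
        = ∑' y : ℤ, (G (a + (y:ℝ)/N) - G a) * p y := by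
      refine tsum_congr fun y => ?_
      rw [hxy y, hadef]
    have h2 : (∑' y : ℤ, T y * p y)
        = (N:ℝ)^2 * (∑' y : ℤ, (G (a + (y:ℝ)/N) - G a) * p y)
          - (N:ℝ) * deriv G a * (∑' y : ℤ, (y:ℝ) * p y)
          - g a / 2 * σ2 := by
      rw [hσ2def, ← tsum_mul_left, ← tsum_mul_left, ← tsum_mul_left,
        ← Summable.tsum_sub (hS1.mul_left _) (hS2.mul_left _),
        ← Summable.tsum_sub ((hS1.mul_left _).sub (hS2.mul_left _)) (hvar.mul_left _)]
      refine tsum_congr fun y => ?_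
      rw [hTdef]
      ring
    rw [h1, h2, hS2z, hadef]
    ring
  rw [heq]
  -- bound the sum
  have habs : |∑' y : ℤ, T y * p y| ≤ ∑' y : ℤ, |T y| * p y := by
    have := norm_tsum_le_tsum_norm (f := fun y : ℤ => T y * p y) (by
      refine hSTabs.congr fun y => ?_
      rw [Real.norm_eq_abs, abs_mul, abs_of_nonneg (hp0 y)])
    simpa [Real.norm_eq_abs, abs_mul, abs_of_nonneg, hp0] using this
  have hsplit : ∑' y : ℤ, |T y| * p y
      = (∑ y ∈ s, |T y| * p y) + ∑' y : ↑((s : Set ℤ))ᶜ, |T (y:ℤ)| * p y :=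
    (Summable.sum_add_tsum_compl hSTabs).symm
  have hpart1 : (∑ y ∈ s, |T y| * p y) ≤ ε' * σ2 := by
    calc (∑ y ∈ s, |T y| * p y) ≤ ∑ y ∈ s, ε' * ((y:ℝ)^2 * p y) := by
          refine Finset.sum_le_sum fun y hy => ?_
          rw [← mul_assoc]
          exact mul_le_mul_of_nonneg_right (boundSmall y hy) (hp0 y)
      _ = ε' * ∑ y ∈ s, (y:ℝ)^2 * p y := by rw [Finset.mul_sum]
      _ ≤ ε' * σ2 := by
          refine mul_le_mul_of_nonneg_left ?_ hε'.le
          exact Summable.sum_le_tsum s (fun y _ => mul_nonneg (sq_nonneg _) (hp0 y)) hvar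
  have hpart2 : (∑' y : ↑((s : Set ℤ))ᶜ, |T (y:ℤ)| * p y)
      ≤ 2 * M * ∑' y : ↑((s : Set ℤ))ᶜ, ((y:ℤ):ℝ)^2 * p y := by
    rw [← tsum_mul_left]
    refine Summable.tsum_le_tsum (fun y => ?_) (hSTabs.subtype _) ((hvar.mul_left (2*M)).subtype _)
    rw [← mul_assoc]
    exact mul_le_mul_of_nonneg_right (boundAll y) (hp0 y)
  have hε'σ : ε' * σ2 ≤ ε / 4 := by
    have hq : ε' * σ2 = ε * σ2 / (4 * (σ2 + 1)) := by rw [hε'def]; ring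
    rw [hq, div_le_div_iff₀ (by positivity) (by norm_num)]
    nlinarith
  have hMη : 2 * M * ∑' y : ↑((s : Set ℤ))ᶜ, ((y:ℤ):ℝ)^2 * p y ≤ ε / 4 := by
    have h1 : 2 * M * ∑' y : ↑((s : Set ℤ))ᶜ, ((y:ℤ):ℝ)^2 * p y ≤ 2 * M * η :=
      mul_le_mul_of_nonneg_left hs.le (by positivity)
    have h2 : 2 * M * η ≤ ε / 4 := by
      have hq : 2 * M * η = 2 * M * ε / (4 * (2 * M + 1)) := by rw [hηdef]; ring
      rw [hq, div_le_div_iff₀ (by positivity) (by norm_num)]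
      nlinarith
    linarith
  calc |∑' y : ℤ, T y * p y| ≤ ∑' y : ℤ, |T y| * p y := habs
    _ = (∑ y ∈ s, |T y| * p y) + ∑' y : ↑((s : Set ℤ))ᶜ, |T (y:ℤ)| * p y := hsplit
    _ ≤ ε / 4 + ε / 4 := by
        have := le_trans hpart2 hMη
        linarith [le_trans hpart1 hε'σ]
    _ < ε := by linarith
end
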